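/- arXiv:2203.06940 — 5 statements merged into one kernel-verified Lean document; each statement's English description precedes it below -/
import Mathlib

section
/- Let N ≥ 1 be an integer and 1 < p < 2. Suppose (q_n) is a sequence of reals with q_n > p and q_n → ∞, and for each n let v_n be a radial Neumann solution with exponent q_n satisfying the high-energy condition ∫_0^1 r^{N−1}( v_n'(r)^p/p + v_n(r)^p/p − v_n(r)^{q_n}/q_n ) dr > (1/p − 1/q_n)·(1/N). Then, as n → ∞, v_n converges to the constant function 1 uniformly on [0,1] and ∫_0^1 r^{N−1} v_n'(r)^p dr → 0. -/
/-!
Integrating the equation over `[0, r]`, and over `[0, 1]` after multiplying it by `v`, gives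
`∫ r^{N-1} v^{p-1} = ∫ r^{N-1} v^{q-1}` and `∫ r^{N-1} (v'^p + v^p - v^q) = 0`.
The first identity forces `v(0) ≤ 1 ≤ v(1)` and bounds the flux, whence `v' ≤ v(1)`. So `v` stays
above `v(1) (1 - 1/(2q))` on `[1 - 1/(2q), 1]`, where `v^{q-1}` is at least `v(1)^{q-1}/2`;
this yields `v(1)^{q-p} ≤ 2^{N+1} q`, hence `v(1) → 1`.
The energy condition and the second identity give `1/N < ∫ r^{N-1} v^q ≤ v(1) ∫ r^{N-1} v^{p-1}`.
If `v(0) ≤ b < 1`, then `v ≤ (1+b)/2` on `[0, (1-b)/4]`, which pushes the right-hand side below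
`1/N` once `v(1)` is close to `1`; hence `v(0) → 1`. Monotonicity turns convergence at both
endpoints into uniform convergence, and the second identity bounds the gradient term by
`(v(1)^p - v(0)^p)/N`.
-/

open Real Set Filter intervalIntegral

/-- `v : [0,1] → ℝ` is a radial Neumann solution with exponent `q` of
`-Δ_p v + v^{p-1} = v^{q-1}` in the unit ball of `ℝ^N`, in the cone of positive,
radially nondecreasing functions; `v'` is its derivative on `[0,1]`. -/
def IsRadialNeumannSol (N : ℕ) (p q : ℝ) (v v' : ℝ → ℝ) : Prop :=
  (∀ r ∈ Set.Icc (0:ℝ) 1, HasDerivWithinAt v (v' r) (Set.Icc (0:ℝ) 1) r) ∧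
  ContinuousOn v' (Set.Icc (0:ℝ) 1) ∧
  (∀ r ∈ Set.Icc (0:ℝ) 1, 0 < v r) ∧
  MonotoneOn v (Set.Icc (0:ℝ) 1) ∧
  (∀ r ∈ Set.Icc (0:ℝ) 1, 0 ≤ v' r) ∧
  v' 0 = 0 ∧ v' 1 = 0 ∧
  (∀ r ∈ Set.Ioo (0:ℝ) 1,
    HasDerivAt (fun s => s ^ (N - 1) * v' s ^ (p - 1))
      (r ^ (N - 1) * (v r ^ (p - 1) - v r ^ (q - 1))) r)

theorem tendsto_one_of_rpow_sub_le {ι : Type*} {l : Filter ι} {x t : ι → ℝ} {K p : ℝ}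
    (ht : Tendsto t l atTop) (hx : ∀ᶠ i in l, 1 ≤ x i)
    (hxt : ∀ᶠ i in l, x i ^ (t i - p) ≤ K * t i) : Tendsto x l (nhds 1) := by
  refine tendsto_order.2 ⟨fun b hb => hx.mono fun i hi => hb.trans_le hi, fun b hb => ?_⟩
  have hb0 : 0 < b := by linarith
  have hgrowth : ∀ᶠ s in atTop, K * b ^ p < b ^ s / s := by
    filter_upwards [(tendsto_exp_mul_div_rpow_atTop 1 (log b) (log_pos hb)).eventually_gt_atTop
      (K * b ^ p)] with s hs
    rwa [rpow_one, ← rpow_def_of_pos hb0] at hs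
  filter_upwards [hx, hxt, ht.eventually hgrowth, ht.eventually_gt_atTop 0,
    ht.eventually_ge_atTop p] with i hxi hxti hgi hti htp
  by_contra! hbx
  have hmono : b ^ (t i - p) ≤ x i ^ (t i - p) := rpow_le_rpow hb0.le hbx (by linarith)
  rw [rpow_sub hb0, div_le_iff₀ (rpow_pos_of_pos hb0 p)] at hmono
  rw [lt_div_iff₀ hti] at hgi
  nlinarith [rpow_pos_of_pos hb0 p]

theorem tendstoUniformlyOn_Icc_of_monotoneOn {ι : Type*} {l : Filter ι} {f : ι → ℝ → ℝ}
    {a b c : ℝ} (hf : ∀ i, MonotoneOn (f i) (Icc a b)) (ha : Tendsto (fun i => f i a) l (nhds c))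
    (hb : Tendsto (fun i => f i b) l (nhds c)) : TendstoUniformlyOn f (fun _ => c) l (Icc a b) := by
  rw [Metric.tendstoUniformlyOn_iff]
  intro ε hε
  filter_upwards [Metric.tendsto_nhds.1 ha ε hε, Metric.tendsto_nhds.1 hb ε hε] with i hai hbi x hx
  have hax := hf i (left_mem_Icc.2 (hx.1.trans hx.2)) hx hx.1
  have hxb := hf i hx (right_mem_Icc.2 (hx.1.trans hx.2)) hx.2
  rw [Real.dist_eq, abs_lt] at hai hbi ⊢
  constructor <;> linarith [hai.1, hbi.2]

theorem intervalIntegrable_pow_mul {f : ℝ → ℝ} {a b : ℝ} (k : ℕ) (hab : a ≤ b)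
    (hf : ContinuousOn f (Icc a b)) :
    IntervalIntegrable (fun x => x ^ k * f x) MeasureTheory.volume a b :=
  ((continuous_pow k).continuousOn.mul hf).intervalIntegrable_of_Icc hab

theorem integral_pow_pred_mul_const {N : ℕ} (hN : 1 ≤ N) (a b C : ℝ) :
    ∫ x in a..b, x ^ (N - 1) * C = (b ^ N - a ^ N) / N * C := by
  rw [integral_mul_const, integral_pow, Nat.sub_add_cancel hN, Nat.cast_sub hN, Nat.cast_one,
    sub_add_cancel]

theorem integral_pow_pred_mul_le_of_le {N : ℕ} (hN : 1 ≤ N) {f : ℝ → ℝ} {a b C : ℝ}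
    (ha : 0 ≤ a) (hab : a ≤ b) (hf : ContinuousOn f (Icc a b)) (hfC : ∀ x ∈ Icc a b, f x ≤ C) :
    ∫ x in a..b, x ^ (N - 1) * f x ≤ (b ^ N - a ^ N) / N * C := by
  rw [← integral_pow_pred_mul_const hN]
  refine integral_mono_on hab (intervalIntegrable_pow_mul _ hab hf)
    (intervalIntegrable_pow_mul _ hab continuousOn_const) fun x hx => ?_
  exact mul_le_mul_of_nonneg_left (hfC x hx) (pow_nonneg (ha.trans hx.1) _)

theorem le_integral_pow_pred_mul_of_le {N : ℕ} (hN : 1 ≤ N) {f : ℝ → ℝ} {a b C : ℝ}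
    (ha : 0 ≤ a) (hab : a ≤ b) (hf : ContinuousOn f (Icc a b)) (hCf : ∀ x ∈ Icc a b, C ≤ f x) :
    (b ^ N - a ^ N) / N * C ≤ ∫ x in a..b, x ^ (N - 1) * f x := by
  rw [← integral_pow_pred_mul_const hN]
  refine integral_mono_on hab (intervalIntegrable_pow_mul _ hab continuousOn_const)
    (intervalIntegrable_pow_mul _ hab hf) fun x hx => ?_
  exact mul_le_mul_of_nonneg_left (hCf x hx) (pow_nonneg (ha.trans hx.1) _)

theorem one_half_le_one_sub_rpow {q : ℝ} (hq : 2 ≤ q) : 1 / 2 ≤ (1 - 1 / (2 * q)) ^ (q - 1) := by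
  have hδ : 1 / (2 * q) ≤ 1 := by
    rw [div_le_one (by positivity)]
    linarith
  have hqδ : (q - 1) * (1 / (2 * q)) ≤ 1 / 2 := by
    rw [mul_one_div, div_le_iff₀ (by positivity)]
    linarith
  have h := one_add_mul_self_le_rpow_one_add (neg_le_neg hδ) (by linarith : 1 ≤ q - 1)
  rw [← sub_eq_add_neg] at h
  linarith

namespace IsRadialNeumannSol

variable {N : ℕ} {p q : ℝ} {v v' : ℝ → ℝ}

theorem continuousOn (hsol : IsRadialNeumannSol N p q v v') : ContinuousOn v (Icc 0 1) :=
  fun r hr => (hsol.1 r hr).continuousWithinAt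

theorem continuousOn_rpow (hsol : IsRadialNeumannSol N p q v v') (c : ℝ) :
    ContinuousOn (fun r => v r ^ c) (Icc 0 1) :=
  hsol.continuousOn.rpow_const fun r hr => Or.inl (hsol.2.2.1 r hr).ne'

theorem continuousOn_deriv_rpow (hsol : IsRadialNeumannSol N p q v v') {c : ℝ} (hc : 0 ≤ c) :
    ContinuousOn (fun r => v' r ^ c) (Icc 0 1) :=
  hsol.2.1.rpow_const fun _ _ => Or.inr hc

theorem hasDerivAt (hsol : IsRadialNeumannSol N p q v v') {r : ℝ} (hr : r ∈ Ioo 0 1) :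
    HasDerivAt v (v' r) r :=
  (hsol.1 r (Ioo_subset_Icc_self hr)).hasDerivAt (Icc_mem_nhds hr.1 hr.2)

theorem le_right (hsol : IsRadialNeumannSol N p q v v') {r : ℝ} (hr : r ∈ Icc 0 1) :
    v r ≤ v 1 :=
  hsol.2.2.2.1 hr (right_mem_Icc.2 zero_le_one) hr.2

theorem left_le (hsol : IsRadialNeumannSol N p q v v') {r : ℝ} (hr : r ∈ Icc 0 1) :
    v 0 ≤ v r :=
  hsol.2.2.2.1 (left_mem_Icc.2 zero_le_one) hr hr.1

theorem flux_eq_integral (hsol : IsRadialNeumannSol N p q v v') (hp : 1 < p) {r : ℝ}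
    (hr : r ∈ Icc (0 : ℝ) 1) :
    r ^ (N - 1) * v' r ^ (p - 1) =
      ∫ s in (0 : ℝ)..r, s ^ (N - 1) * (v s ^ (p - 1) - v s ^ (q - 1)) := by
  have hsub : Icc 0 r ⊆ Icc (0 : ℝ) 1 := Icc_subset_Icc_right hr.2
  rw [integral_eq_sub_of_hasDeriv_right_of_le (f := fun s => s ^ (N - 1) * v' s ^ (p - 1)) hr.1
    (((continuous_pow _).continuousOn.mul (hsol.continuousOn_deriv_rpow (by linarith))).mono hsub)
    (fun s hs => (hsol.2.2.2.2.2.2.2 s ⟨hs.1, hs.2.trans_le hr.2⟩).hasDerivWithinAt)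
    (intervalIntegrable_pow_mul _ hr.1
      (((hsol.continuousOn_rpow _).sub (hsol.continuousOn_rpow _)).mono hsub)),
    hsol.2.2.2.2.2.1, zero_rpow (by linarith), mul_zero, sub_zero]

theorem integral_source_eq_zero (hsol : IsRadialNeumannSol N p q v v') (hp : 1 < p) :
    ∫ r in (0 : ℝ)..1, r ^ (N - 1) * (v r ^ (p - 1) - v r ^ (q - 1)) = 0 := by
  rw [← hsol.flux_eq_integral hp (right_mem_Icc.2 zero_le_one), hsol.2.2.2.2.2.2.1,
    zero_rpow (by linarith), mul_zero]

theorem integral_rpow_sub_one_eq (hsol : IsRadialNeumannSol N p q v v') (hp : 1 < p) :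
    ∫ r in (0 : ℝ)..1, r ^ (N - 1) * v r ^ (p - 1) =
      ∫ r in (0 : ℝ)..1, r ^ (N - 1) * v r ^ (q - 1) := by
  have h := hsol.integral_source_eq_zero hp
  simp only [mul_sub] at h
  rwa [integral_sub (intervalIntegrable_pow_mul _ zero_le_one (hsol.continuousOn_rpow _))
    (intervalIntegrable_pow_mul _ zero_le_one (hsol.continuousOn_rpow _)), sub_eq_zero] at h

theorem intervalIntegrable_source (hsol : IsRadialNeumannSol N p q v v') :
    IntervalIntegrable (fun r => r ^ (N - 1) * (v r ^ (p - 1) - v r ^ (q - 1)))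
      MeasureTheory.volume 0 1 :=
  intervalIntegrable_pow_mul _ zero_le_one
    ((hsol.continuousOn_rpow _).sub (hsol.continuousOn_rpow _))

theorem one_le_right (hsol : IsRadialNeumannSol N p q v v') (hp : 1 < p) (hpq : p < q) :
    1 ≤ v 1 := by
  by_contra! h1
  refine (intervalIntegral_pos_of_pos_on hsol.intervalIntegrable_source (fun r hr => ?_)
    zero_lt_one).ne' (hsol.integral_source_eq_zero hp)
  have hr' := Ioo_subset_Icc_self hr
  exact mul_pos (pow_pos hr.1 _) (sub_pos.2 (rpow_lt_rpow_of_exponent_gt (hsol.2.2.1 r hr')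
    ((hsol.le_right hr').trans_lt h1) (by linarith)))

theorem left_le_one (hsol : IsRadialNeumannSol N p q v v') (hp : 1 < p) (hpq : p < q) :
    v 0 ≤ 1 := by
  by_contra! h1
  refine (intervalIntegral_pos_of_pos_on
    (f := fun r => -(r ^ (N - 1) * (v r ^ (p - 1) - v r ^ (q - 1))))
    hsol.intervalIntegrable_source.neg (fun r hr => ?_) zero_lt_one).ne'
    (by rw [integral_neg, hsol.integral_source_eq_zero hp, neg_zero])
  have hr' := Ioo_subset_Icc_self hr
  exact neg_pos.2 (mul_neg_of_pos_of_neg (pow_pos hr.1 _) (sub_neg.2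
    (rpow_lt_rpow_of_exponent_lt (h1.trans_le (hsol.left_le hr')) (by linarith))))

theorem integral_energy_eq_zero (hsol : IsRadialNeumannSol N p q v v') (hp : 1 < p) :
    ∫ r in (0 : ℝ)..1, r ^ (N - 1) * (v' r ^ p + v r ^ p - v r ^ q) = 0 := by
  have hderiv : ∀ r ∈ Ioo (0 : ℝ) 1, HasDerivAt (fun s => s ^ (N - 1) * v' s ^ (p - 1) * v s)
      (r ^ (N - 1) * (v' r ^ p + v r ^ p - v r ^ q)) r := by
    intro r hr
    refine ((hsol.2.2.2.2.2.2.2 r hr).mul (hsol.hasDerivAt hr)).congr_deriv ?_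
    have hv := (hsol.2.2.1 r (Ioo_subset_Icc_self hr)).ne'
    have hv' : v' r ^ p = v' r ^ (p - 1) * v' r := by
      rw [← rpow_add_one' (hsol.2.2.2.2.1 r (Ioo_subset_Icc_self hr)) (by linarith),
        sub_add_cancel]
    rw [hv', rpow_sub_one hv p, rpow_sub_one hv q]
    field_simp
    ring
  rw [integral_eq_sub_of_hasDeriv_right_of_le (f := fun s => s ^ (N - 1) * v' s ^ (p - 1) * v s)
    zero_le_one (((continuous_pow _).continuousOn.mul
      (hsol.continuousOn_deriv_rpow (by linarith))).mul hsol.continuousOn)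
    (fun r hr => (hderiv r hr).hasDerivWithinAt)
    (intervalIntegrable_pow_mul _ zero_le_one (((hsol.continuousOn_deriv_rpow (by linarith)).add
      (hsol.continuousOn_rpow _)).sub (hsol.continuousOn_rpow _))),
    hsol.2.2.2.2.2.1, hsol.2.2.2.2.2.2.1, zero_rpow (by linarith)]
  ring

theorem deriv_le_right (hsol : IsRadialNeumannSol N p q v v') (hN : 1 ≤ N) (hp : 1 < p) {r : ℝ}
    (hr : r ∈ Icc (0 : ℝ) 1) : v' r ≤ v 1 := by
  rcases hr.1.eq_or_lt with rfl | hr0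
  · rw [hsol.2.2.2.2.2.1]
    exact (hsol.2.2.1 1 (right_mem_Icc.2 zero_le_one)).le
  have hsub : Icc 0 r ⊆ Icc (0 : ℝ) 1 := Icc_subset_Icc_right hr.2
  have hflux : r ^ (N - 1) * v' r ^ (p - 1) ≤ r ^ N / N * v 1 ^ (p - 1) := by
    have h := integral_pow_pred_mul_le_of_le hN le_rfl hr.1
      (f := fun s => v s ^ (p - 1) - v s ^ (q - 1)) (C := v 1 ^ (p - 1))
      (((hsol.continuousOn_rpow _).sub (hsol.continuousOn_rpow _)).mono hsub) fun s hs =>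
        (sub_le_self _ (rpow_nonneg (hsol.2.2.1 s (hsub hs)).le _)).trans
          (rpow_le_rpow (hsol.2.2.1 s (hsub hs)).le (hsol.le_right (hsub hs)) (by linarith))
    rwa [zero_pow (by omega), sub_zero, ← hsol.flux_eq_integral hp hr] at h
  have hrN : r ^ N / N ≤ r ^ (N - 1) := calc
    r ^ N / N ≤ r ^ N := div_le_self (by positivity) (by exact_mod_cast hN)
    _ ≤ r ^ (N - 1) := pow_le_pow_of_le_one hr.1 hr.2 (by omega)
  have hpow : v' r ^ (p - 1) ≤ v 1 ^ (p - 1) := le_of_mul_le_mul_left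
    (hflux.trans (mul_le_mul_of_nonneg_right hrN (rpow_nonneg
      (hsol.2.2.1 1 (right_mem_Icc.2 zero_le_one)).le _))) (pow_pos hr0 _)
  exact (rpow_le_rpow_iff (hsol.2.2.2.2.1 r hr) (hsol.2.2.1 1 (right_mem_Icc.2 zero_le_one)).le
    (by linarith)).1 hpow

theorem sub_le_mul_sub (hsol : IsRadialNeumannSol N p q v v') (hN : 1 ≤ N) (hp : 1 < p)
    {x y : ℝ} (hx : x ∈ Icc (0 : ℝ) 1) (hy : y ∈ Icc (0 : ℝ) 1) (hxy : x ≤ y) :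
    v y - v x ≤ v 1 * (y - x) := by
  refine (convex_Icc 0 1).image_sub_le_mul_sub_of_deriv_le hsol.continuousOn
    (fun r hr => ?_) (fun r hr => ?_) x hx y hy hxy <;> rw [interior_Icc] at hr
  · exact (hsol.hasDerivAt hr).differentiableAt.differentiableWithinAt
  · rw [(hsol.hasDerivAt hr).deriv]
    exact hsol.deriv_le_right hN hp (Ioo_subset_Icc_self hr)

theorem integral_rpow_sub_one_le (hsol : IsRadialNeumannSol N p q v v') (hN : 1 ≤ N)
    (hp : 1 < p) : ∫ r in (0 : ℝ)..1, r ^ (N - 1) * v r ^ (p - 1) ≤ v 1 ^ (p - 1) / N := by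
  have h := integral_pow_pred_mul_le_of_le hN le_rfl zero_le_one (hsol.continuousOn_rpow (p - 1))
    fun r hr => rpow_le_rpow (hsol.2.2.1 r hr).le (hsol.le_right hr) (by linarith)
  rwa [one_pow, zero_pow (by omega), sub_zero, div_mul_eq_mul_div, one_mul] at h

theorem integral_rpow_le_mul (hsol : IsRadialNeumannSol N p q v v') (hp : 1 < p) :
    ∫ r in (0 : ℝ)..1, r ^ (N - 1) * v r ^ q ≤
      v 1 * ∫ r in (0 : ℝ)..1, r ^ (N - 1) * v r ^ (p - 1) := by
  rw [hsol.integral_rpow_sub_one_eq hp, ← integral_const_mul]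
  refine integral_mono_on zero_le_one (intervalIntegrable_pow_mul _ zero_le_one
    (hsol.continuousOn_rpow _)) ((intervalIntegrable_pow_mul _ zero_le_one
    (hsol.continuousOn_rpow _)).const_mul _) fun r hr => ?_
  have hv := hsol.2.2.1 r hr
  rw [rpow_sub_one hv.ne', mul_div_assoc', mul_comm (v 1), div_mul_eq_mul_div, le_div_iff₀ hv]
  exact mul_le_mul_of_nonneg_left (hsol.le_right hr)
    (mul_nonneg (pow_nonneg hr.1 _) (rpow_nonneg hv.le _))

theorem rpow_div_two_pow_le (hsol : IsRadialNeumannSol N p q v v') (hN : 1 ≤ N) (hp : 1 < p)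
    (hq : 2 ≤ q) {r : ℝ} (hr : r ∈ Icc (1 - 1 / (2 * q)) 1) :
    v 1 ^ (q - 1) / 2 ^ N ≤ r ^ (N - 1) * v r ^ (q - 1) := by
  have hM : 0 < v 1 := hsol.2.2.1 1 (right_mem_Icc.2 zero_le_one)
  have hδ : 1 / (2 * q) ≤ 1 / 4 := by
    rw [div_le_div_iff₀ (by positivity) (by norm_num)]
    linarith
  have hr01 : r ∈ Icc (0 : ℝ) 1 := ⟨by linarith [hr.1], hr.2⟩
  have hvr : v 1 * (1 - 1 / (2 * q)) ≤ v r := by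
    have := hsol.sub_le_mul_sub hN hp hr01 (right_mem_Icc.2 zero_le_one) hr.2
    nlinarith [hr.1]
  have hpow : v 1 ^ (q - 1) / 2 ≤ v r ^ (q - 1) := calc
    v 1 ^ (q - 1) / 2 ≤ v 1 ^ (q - 1) * (1 - 1 / (2 * q)) ^ (q - 1) := by
      nlinarith [rpow_pos_of_pos hM (q - 1), one_half_le_one_sub_rpow hq]
    _ = (v 1 * (1 - 1 / (2 * q))) ^ (q - 1) := (mul_rpow hM.le (by linarith)).symm
    _ ≤ v r ^ (q - 1) := rpow_le_rpow (mul_nonneg hM.le (by linarith)) hvr (by linarith)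
  have h2N : (2 : ℝ) ^ N = 2 ^ (N - 1) * 2 := by rw [← pow_succ, Nat.sub_add_cancel hN]
  calc v 1 ^ (q - 1) / 2 ^ N = (1 / 2) ^ (N - 1) * (v 1 ^ (q - 1) / 2) := by
        rw [h2N, div_pow, one_pow]
        field_simp
    _ ≤ r ^ (N - 1) * v r ^ (q - 1) :=
        mul_le_mul (pow_le_pow_left₀ (by norm_num) (by linarith [hr.1]) _) hpow
          (by positivity) (pow_nonneg hr01.1 _)

theorem rpow_right_le (hsol : IsRadialNeumannSol N p q v v') (hN : 1 ≤ N) (hp : 1 < p)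
    (hq : 2 ≤ q) : v 1 ^ (q - p) ≤ 2 ^ (N + 1) * q := by
  have hM : 0 < v 1 := hsol.2.2.1 1 (right_mem_Icc.2 zero_le_one)
  have hδ0 : 0 < 1 / (2 * q) := by positivity
  have hδ1 : 1 / (2 * q) < 1 := by
    rw [div_lt_one (by positivity)]
    linarith
  have hδ : 1 - 1 / (2 * q) ≤ 1 := by linarith
  have hint : 1 / (2 * q) * (v 1 ^ (q - 1) / 2 ^ N) ≤ v 1 ^ (p - 1) := calc
    1 / (2 * q) * (v 1 ^ (q - 1) / 2 ^ N) =
        ∫ _ in (1 - 1 / (2 * q))..1, v 1 ^ (q - 1) / 2 ^ N := by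
      rw [integral_const, smul_eq_mul, sub_sub_cancel]
    _ ≤ ∫ r in (1 - 1 / (2 * q))..1, r ^ (N - 1) * v r ^ (q - 1) :=
      integral_mono_on hδ intervalIntegrable_const (intervalIntegrable_pow_mul _ hδ
        ((hsol.continuousOn_rpow _).mono (Icc_subset_Icc_left (by linarith))))
        fun r hr => hsol.rpow_div_two_pow_le hN hp hq hr
    _ ≤ ∫ r in (0 : ℝ)..1, r ^ (N - 1) * v r ^ (q - 1) :=
      integral_mono_interval (by linarith) hδ le_rfl
        (MeasureTheory.ae_restrict_of_forall_mem measurableSet_Ioc fun r hr => mul_nonneg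
          (pow_nonneg hr.1.le _) (rpow_nonneg (hsol.2.2.1 r (Ioc_subset_Icc_self hr)).le _))
        (intervalIntegrable_pow_mul _ zero_le_one (hsol.continuousOn_rpow _))
    _ = ∫ r in (0 : ℝ)..1, r ^ (N - 1) * v r ^ (p - 1) := (hsol.integral_rpow_sub_one_eq hp).symm
    _ ≤ v 1 ^ (p - 1) / N := hsol.integral_rpow_sub_one_le hN hp
    _ ≤ v 1 ^ (p - 1) := div_le_self (rpow_nonneg hM.le _) (by exact_mod_cast hN)
  rw [show q - p = (q - 1) - (p - 1) by ring, rpow_sub hM, div_le_iff₀ (rpow_pos_of_pos hM _),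
    pow_succ]
  field_simp at hint
  linarith

theorem integral_grad_le (hsol : IsRadialNeumannSol N p q v v') (hN : 1 ≤ N) (hp : 1 < p) :
    ∫ r in (0 : ℝ)..1, r ^ (N - 1) * v' r ^ p ≤ (v 1 ^ p - v 0 ^ p) / N := by
  have hM : 0 < v 1 := hsol.2.2.1 1 (right_mem_Icc.2 zero_le_one)
  have hgrad := intervalIntegrable_pow_mul (N - 1) zero_le_one
    (hsol.continuousOn_deriv_rpow (c := p) (by linarith))
  have hvp := intervalIntegrable_pow_mul (N - 1) zero_le_one (hsol.continuousOn_rpow p)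
  have hvq := intervalIntegrable_pow_mul (N - 1) zero_le_one (hsol.continuousOn_rpow q)
  have hsplit : ∫ r in (0 : ℝ)..1, r ^ (N - 1) * v' r ^ p =
      (∫ r in (0 : ℝ)..1, r ^ (N - 1) * v r ^ q) - ∫ r in (0 : ℝ)..1, r ^ (N - 1) * v r ^ p := by
    have h := hsol.integral_energy_eq_zero hp
    simp only [mul_sub, mul_add] at h
    rw [integral_sub (hgrad.add hvp) hvq, integral_add hgrad hvp] at h
    linarith
  have hupper : ∫ r in (0 : ℝ)..1, r ^ (N - 1) * v r ^ q ≤ v 1 ^ p / N := calc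
    _ ≤ v 1 * ∫ r in (0 : ℝ)..1, r ^ (N - 1) * v r ^ (p - 1) := hsol.integral_rpow_le_mul hp
    _ ≤ v 1 * (v 1 ^ (p - 1) / N) :=
      mul_le_mul_of_nonneg_left (hsol.integral_rpow_sub_one_le hN hp) hM.le
    _ = v 1 ^ p / N := by rw [mul_div_assoc', mul_comm, ← rpow_add_one hM.ne', sub_add_cancel]
  have hlower := le_integral_pow_pred_mul_of_le hN le_rfl zero_le_one (hsol.continuousOn_rpow p)
    fun r hr => rpow_le_rpow (hsol.2.2.1 0 (left_mem_Icc.2 zero_le_one)).le (hsol.left_le hr)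
      (by linarith : 0 ≤ p)
  rw [one_pow, zero_pow (by omega), sub_zero, div_mul_eq_mul_div, one_mul] at hlower
  rw [hsplit, sub_div]
  linarith

theorem inv_lt_mul_integral (hsol : IsRadialNeumannSol N p q v v') (hp : 1 < p) (hpq : p < q)
    (hE : (1 / p - 1 / q) * (1 / (N : ℝ)) <
      ∫ r in (0 : ℝ)..1, r ^ (N - 1) * (v' r ^ p / p + v r ^ p / p - v r ^ q / q)) :
    1 / (N : ℝ) < v 1 * ∫ r in (0 : ℝ)..1, r ^ (N - 1) * v r ^ (p - 1) := by
  have hpq' : 0 < 1 / p - 1 / q := sub_pos.2 (one_div_lt_one_div_of_lt (by linarith) hpq)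
  have henergy : IntervalIntegrable (fun r => r ^ (N - 1) * (v' r ^ p + v r ^ p - v r ^ q))
      MeasureTheory.volume 0 1 := intervalIntegrable_pow_mul (N - 1) zero_le_one
    (((hsol.continuousOn_deriv_rpow (c := p) (by linarith)).add (hsol.continuousOn_rpow p)).sub
      (hsol.continuousOn_rpow q))
  have hvq := intervalIntegrable_pow_mul (N - 1) zero_le_one (hsol.continuousOn_rpow q)
  have hdecomp : ∫ r in (0 : ℝ)..1, r ^ (N - 1) * (v' r ^ p / p + v r ^ p / p - v r ^ q / q) =
      1 / p * (∫ r in (0 : ℝ)..1, r ^ (N - 1) * (v' r ^ p + v r ^ p - v r ^ q)) +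
        (1 / p - 1 / q) * ∫ r in (0 : ℝ)..1, r ^ (N - 1) * v r ^ q := by
    rw [← integral_const_mul, ← integral_const_mul,
      ← integral_add (henergy.const_mul _) (hvq.const_mul _)]
    refine integral_congr fun r _ => ?_
    ring
  rw [hdecomp, hsol.integral_energy_eq_zero hp, mul_zero, zero_add] at hE
  exact ((mul_lt_mul_iff_right₀ hpq').1 hE).trans_le (hsol.integral_rpow_le_mul hp)

theorem one_lt_of_left_le (hsol : IsRadialNeumannSol N p q v v') (hN : 1 ≤ N) (hp : 1 < p)
    (hpq : p < q)
    (hE : (1 / p - 1 / q) * (1 / (N : ℝ)) <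
      ∫ r in (0 : ℝ)..1, r ^ (N - 1) * (v' r ^ p / p + v r ^ p / p - v r ^ q / q))
    {b : ℝ} (hb : b < 1) (hleft : v 0 ≤ b) (hright : v 1 ≤ 2) :
    1 < v 1 * (((1 - b) / 4) ^ N * ((1 + b) / 2) ^ (p - 1) +
      (1 - ((1 - b) / 4) ^ N) * v 1 ^ (p - 1)) := by
  have hM : 0 < v 1 := hsol.2.2.1 1 (right_mem_Icc.2 zero_le_one)
  have hb0 : 0 < b := (hsol.2.2.1 0 (left_mem_Icc.2 zero_le_one)).trans_le hleft
  set R := (1 - b) / 4 with hR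
  have hR0 : 0 ≤ R := by linarith
  have hR1 : R ≤ 1 := by linarith
  have hsmall : ∀ r ∈ Icc 0 R, v r ^ (p - 1) ≤ ((1 + b) / 2) ^ (p - 1) := by
    intro r hr
    have hr01 : r ∈ Icc (0 : ℝ) 1 := ⟨hr.1, hr.2.trans hR1⟩
    have hlip := hsol.sub_le_mul_sub hN hp (left_mem_Icc.2 zero_le_one) hr01 hr.1
    exact rpow_le_rpow (hsol.2.2.1 r hr01).le (by nlinarith [hr.1, hr.2]) (by linarith)
  have hnear := integral_pow_pred_mul_le_of_le hN le_rfl hR0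
    ((hsol.continuousOn_rpow (p - 1)).mono (Icc_subset_Icc_right hR1)) hsmall
  have hfar := integral_pow_pred_mul_le_of_le hN hR0 hR1
    ((hsol.continuousOn_rpow (p - 1)).mono (Icc_subset_Icc_left hR0)) fun r hr =>
      rpow_le_rpow (hsol.2.2.1 r ⟨hR0.trans hr.1, hr.2⟩).le
        (hsol.le_right ⟨hR0.trans hr.1, hr.2⟩) (by linarith : 0 ≤ p - 1)
  rw [zero_pow (by omega), sub_zero] at hnear
  rw [one_pow] at hfar
  have hsplit := integral_add_adjacent_intervals
    (intervalIntegrable_pow_mul (N - 1) hR0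
      ((hsol.continuousOn_rpow (p - 1)).mono (Icc_subset_Icc_right hR1)))
    (intervalIntegrable_pow_mul (N - 1) hR1
      ((hsol.continuousOn_rpow (p - 1)).mono (Icc_subset_Icc_left hR0)))
  have hNpos : (0 : ℝ) < N := by exact_mod_cast hN
  refine (div_lt_div_iff_of_pos_right hNpos).1 ?_
  calc 1 / (N : ℝ) < v 1 * ∫ r in (0 : ℝ)..1, r ^ (N - 1) * v r ^ (p - 1) :=
        hsol.inv_lt_mul_integral hp hpq hE
    _ ≤ v 1 * (R ^ N / N * ((1 + b) / 2) ^ (p - 1) + (1 - R ^ N) / N * v 1 ^ (p - 1)) := by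
        rw [← hsplit]
        exact mul_le_mul_of_nonneg_left (add_le_add hnear hfar) hM.le
    _ = _ := by ring

end IsRadialNeumannSol

theorem tendsto_left_of_tendsto_right {ι : Type*} {l : Filter ι} {N : ℕ} (hN : 1 ≤ N) {p : ℝ}
    (hp : 1 < p) {q : ι → ℝ} {v v' : ι → ℝ → ℝ}
    (hsol : ∀ i, IsRadialNeumannSol N p (q i) (v i) (v' i)) (hpq : ∀ᶠ i in l, p < q i)
    (hE : ∀ i, (1 / p - 1 / q i) * (1 / (N : ℝ)) <
      ∫ r in (0 : ℝ)..1, r ^ (N - 1) * (v' i r ^ p / p + v i r ^ p / p - v i r ^ q i / q i))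
    (hright : Tendsto (fun i => v i 1) l (nhds 1)) : Tendsto (fun i => v i 0) l (nhds 1) := by
  refine tendsto_order.2 ⟨fun b hb => ?_,
    fun b hb => hpq.mono fun i hi => ((hsol i).left_le_one hp hi).trans_lt hb⟩
  set b' := max b 0
  have hb' : b' < 1 := max_lt hb one_pos
  set R := ((1 - b') / 4) ^ N
  set c := ((1 + b') / 2) ^ (p - 1)
  have hφ : ContinuousAt (fun x : ℝ => x * (R * c + (1 - R) * x ^ (p - 1))) 1 := by
    fun_prop (disch := norm_num)
  have hφ1 : 1 * (R * c + (1 - R) * 1 ^ (p - 1)) < 1 := by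
    have hR : 0 < R := pow_pos (by linarith) _
    have hc : c < 1 := rpow_lt_one (by linarith [le_max_right b 0]) (by linarith) (by linarith)
    rw [one_rpow]
    nlinarith
  filter_upwards [hpq, (hφ.tendsto.comp hright).eventually_lt_const hφ1,
    hright.eventually_le_const one_lt_two] with i hi hφi hi2
  by_contra! hle
  have := (hsol i).one_lt_of_left_le hN hp hi (hE i) hb' (hle.trans (le_max_left b 0)) hi2
  exact hφi.not_gt this

theorem highEnergy_solution_tendsto_one_general
    (N : ℕ) (hN : 1 ≤ N) (p : ℝ) (hp1 : 1 < p)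
    (q : ℕ → ℝ) (hqtop : Tendsto q atTop atTop)
    (v v' : ℕ → ℝ → ℝ)
    (hsol : ∀ n, IsRadialNeumannSol N p (q n) (v n) (v' n))
    (hE : ∀ n, (1 / p - 1 / q n) * (1 / (N : ℝ)) <
      ∫ r in (0:ℝ)..1, r ^ (N - 1) *
        (v' n r ^ p / p + v n r ^ p / p - v n r ^ q n / q n)) :
    TendstoUniformlyOn (fun n r => v n r) (fun _ => 1) atTop (Set.Icc (0:ℝ) 1) ∧
    Tendsto (fun n => ∫ r in (0:ℝ)..1, r ^ (N - 1) * v' n r ^ p) atTop (nhds 0) := by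
  have hpq : ∀ᶠ n in atTop, p < q n := hqtop.eventually_gt_atTop p
  have hright : Tendsto (fun n => v n 1) atTop (nhds 1) :=
    tendsto_one_of_rpow_sub_le hqtop (hpq.mono fun n h => (hsol n).one_le_right hp1 h)
      ((hqtop.eventually_ge_atTop 2).mono fun n h => (hsol n).rpow_right_le hN hp1 h)
  have hleft := tendsto_left_of_tendsto_right hN hp1 hsol hpq hE hright
  refine ⟨tendstoUniformlyOn_Icc_of_monotoneOn (fun n => (hsol n).2.2.2.1) hleft hright, ?_⟩
  have hbound := ((hright.rpow_const (p := p) (Or.inl one_ne_zero)).sub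
    (hleft.rpow_const (p := p) (Or.inl one_ne_zero))).div_const (N : ℝ)
  rw [sub_self, zero_div] at hbound
  refine squeeze_zero (fun n => integral_nonneg zero_le_one fun r hr => mul_nonneg
    (pow_nonneg hr.1 _) (rpow_nonneg ((hsol n).2.2.2.2.1 r hr) _))
    (fun n => (hsol n).integral_grad_le hN hp1) hbound

/-- Asymptotics of the high-energy solutions: as `q_n → ∞`, the solutions `v_n`
with energy above that of the constant `1` converge to `1` uniformly on `[0,1]`
and their gradients tend to `0` in `L^p`. -/
theorem highEnergy_solution_tendsto_one
    (N : ℕ) (hN : 1 ≤ N) (p : ℝ) (hp1 : 1 < p) (hp2 : p < 2)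
    (q : ℕ → ℝ) (hq : ∀ n, p < q n) (hqtop : Tendsto q atTop atTop)
    (v v' : ℕ → ℝ → ℝ)
    (hsol : ∀ n, IsRadialNeumannSol N p (q n) (v n) (v' n))
    (hE : ∀ n, (1 / p - 1 / q n) * (1 / (N : ℝ)) <
      ∫ r in (0:ℝ)..1, r ^ (N - 1) *
        (v' n r ^ p / p + v n r ^ p / p - v n r ^ q n / q n)) :
    TendstoUniformlyOn (fun n r => v n r) (fun _ => 1) atTop (Set.Icc (0:ℝ) 1) ∧
    Tendsto (fun n => ∫ r in (0:ℝ)..1, r ^ (N - 1) * v' n r ^ p) atTop (nhds 0) :=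
  highEnergy_solution_tendsto_one_general N hN p hp1 q hqtop v v' hsol hE
end

section
/- Let N ≥ 1 be an integer and 1 < p < q. Let v : [0,1] → ℝ be continuously differentiable with v'(r) ≥ 0 for all r, and assume the function W(r) := r^{N−1}·v'(r)^{p−1} is differentiable on (0,1) with W'(r) = r^{N−1}·(v(r)^{p−1} − v(r)^{q−1}) for every r ∈ (0,1). Then the function L_q(r) := ((p−1)/p)·v'(r)^p − v(r)^p/p + v(r)^q/q is nonincreasing on [0,1]. -/
open Real Set Filter Topology

/-!
Differentiating `L_q` along the solution, the terms `v^{p-1} v'` and `v^{q-1} v'` coming from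
the equation cancel against those of `-v^p/p + v^q/q`, and only the damping term of the radial
Laplacian survives: `L_q'(r) = -((N-1)/r) v'(r)^p ≤ 0`. To differentiate `v'^p` one writes it as
`(r^{1-N} W(r))^{p/(p-1)}`, which is legitimate because `v' ≥ 0`.
-/

theorem hasDerivAt_of_hasDerivAt_pow_mul {g : ℝ → ℝ} {w r : ℝ} (n : ℕ) (hr : r ≠ 0)
    (h : HasDerivAt (fun s => s ^ n * g s) (r ^ n * w) r) :
    HasDerivAt g (w - n * g r / r) r := by
  have hquot : g =ᶠ[𝓝 r] fun s => s ^ n * g s / s ^ n := by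
    filter_upwards [eventually_ne_nhds hr] with s hs
    rw [mul_div_cancel_left₀ _ (pow_ne_zero n hs)]
  refine (h.div (hasDerivAt_pow n r) (pow_ne_zero n hr)).congr_of_eventuallyEq hquot
    |>.congr_deriv ?_
  have hrn : r ^ n ≠ 0 := pow_ne_zero n hr
  rcases n.eq_zero_or_pos with rfl | hn
  · simp
  · rw [← pow_sub_one_mul hn.ne' r]
    field_simp

theorem hasDerivAt_rpow_of_hasDerivAt_rpow_sub_one {f : ℝ → ℝ} {p d r : ℝ} (hp : 1 < p)
    (hf : ∀ᶠ s in 𝓝 r, 0 ≤ f s) (h : HasDerivAt (fun s => f s ^ (p - 1)) d r) :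
    HasDerivAt (fun s => f s ^ p) (p / (p - 1) * f r * d) r := by
  have hp1 : p - 1 ≠ 0 := by linarith
  have hexp : 1 ≤ p / (p - 1) := by rw [le_div_iff₀ (by linarith)]; linarith
  have hpow : ∀ {x : ℝ}, 0 ≤ x → (x ^ (p - 1)) ^ (p / (p - 1)) = x ^ p := fun hx => by
    rw [← rpow_mul hx, mul_div_cancel₀ _ hp1]
  have hf_eq : (fun s => f s ^ p) =ᶠ[𝓝 r] fun s => (f s ^ (p - 1)) ^ (p / (p - 1)) := by
    filter_upwards [hf] with s hs using (hpow hs).symm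
  refine ((hasDerivAt_rpow_const (Or.inr hexp)).comp r h).congr_of_eventuallyEq hf_eq
    |>.congr_deriv ?_
  have hroot : (f r ^ (p - 1)) ^ (p / (p - 1) - 1) = f r := by
    have hexp_mul : (p - 1) * (p / (p - 1) - 1) = 1 := by field_simp; ring
    rw [← rpow_mul hf.self_of_nhds, hexp_mul, rpow_one]
  rw [hroot, mul_assoc]

theorem hasDerivAt_radial_energy {u u' : ℝ → ℝ} {p q r : ℝ} (n : ℕ) (hp : 1 < p) (hq : 1 ≤ q)
    (hr : r ≠ 0) (hu : HasDerivAt u (u' r) r) (hu' : ∀ᶠ s in 𝓝 r, 0 ≤ u' s)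
    (hW : HasDerivAt (fun s => s ^ n * u' s ^ (p - 1))
      (r ^ n * (u r ^ (p - 1) - u r ^ (q - 1))) r) :
    HasDerivAt (fun s => (p - 1) / p * u' s ^ p - u s ^ p / p + u s ^ q / q)
      (-(n * u' r ^ (p - 1) * u' r / r)) r := by
  have hkin := hasDerivAt_rpow_of_hasDerivAt_rpow_sub_one hp hu'
    (hasDerivAt_of_hasDerivAt_pow_mul n hr hW)
  have hup := (hasDerivAt_rpow_const (p := p) (Or.inr hp.le)).comp r hu
  have huq := (hasDerivAt_rpow_const (p := q) (Or.inr hq)).comp r hu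
  refine ((hkin.const_mul _).sub (hup.div_const p)).add (huq.div_const q) |>.congr_deriv ?_
  have hp0 : p ≠ 0 := by linarith
  have hq0 : q ≠ 0 := by linarith
  have hp1 : p - 1 ≠ 0 := by linarith
  field_simp
  ring

theorem Lq_antitone_general
    (N : ℕ) (p q : ℝ) (hp : 1 < p) (hpq : p < q)
    (v v' : ℝ → ℝ)
    (hv : ∀ r ∈ Set.Icc (0:ℝ) 1, HasDerivWithinAt v (v' r) (Set.Icc (0:ℝ) 1) r)
    (hv'cont : ContinuousOn v' (Set.Icc (0:ℝ) 1))
    (hv'nonneg : ∀ r ∈ Set.Icc (0:ℝ) 1, 0 ≤ v' r)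
    (hW : ∀ r ∈ Set.Ioo (0:ℝ) 1,
      HasDerivAt (fun s => s ^ (N - 1) * v' s ^ (p - 1))
        (r ^ (N - 1) * (v r ^ (p - 1) - v r ^ (q - 1))) r) :
    AntitoneOn (fun r => (p - 1) / p * v' r ^ p - v r ^ p / p + v r ^ q / q)
      (Set.Icc (0:ℝ) 1) := by
  have hvcont : ContinuousOn v (Icc 0 1) := fun r hr => (hv r hr).continuousWithinAt
  have hcont : ContinuousOn (fun r => (p - 1) / p * v' r ^ p - v r ^ p / p + v r ^ q / q)
      (Icc 0 1) :=
    ((continuousOn_const.mul (hv'cont.rpow_const fun _ _ => Or.inr (by linarith))).sub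
      ((hvcont.rpow_const fun _ _ => Or.inr (by linarith)).div_const p)).add
      ((hvcont.rpow_const fun _ _ => Or.inr (by linarith)).div_const q)
  refine antitoneOn_of_hasDerivWithinAt_nonpos (convex_Icc 0 1) hcont
    (f' := fun r => -((N - 1 : ℕ) * v' r ^ (p - 1) * v' r / r)) ?_ ?_ <;> rw [interior_Icc]
  · intro r hr
    have hv_at : HasDerivAt v (v' r) r := (hv r (Ioo_subset_Icc_self hr)).hasDerivAt
      (Icc_mem_nhds hr.1 hr.2)
    have hv'_near : ∀ᶠ s in 𝓝 r, 0 ≤ v' s := by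
      filter_upwards [Icc_mem_nhds hr.1 hr.2] using hv'nonneg
    exact (hasDerivAt_radial_energy (N - 1) hp (by linarith) hr.1.ne' hv_at hv'_near
      (hW r hr)).hasDerivWithinAt
  · intro r hr
    have hv'r := hv'nonneg r (Ioo_subset_Icc_self hr)
    simp only [neg_nonpos]
    exact div_nonneg (by positivity) hr.1.le

/-- Along any `C^1` radial solution of the equation
`-(r^{N-1}(v')^{p-1})' = r^{N-1}(v^{q-1} - v^{p-1})` with `v' ≥ 0`, the quantity
`L_q(r) = ((p-1)/p) v'(r)^p - v(r)^p/p + v(r)^q/q` is nonincreasing on `[0,1]`. -/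
theorem Lq_antitone
    (N : ℕ) (hN : 1 ≤ N) (p q : ℝ) (hp : 1 < p) (hpq : p < q)
    (v v' : ℝ → ℝ)
    (hv : ∀ r ∈ Set.Icc (0:ℝ) 1, HasDerivWithinAt v (v' r) (Set.Icc (0:ℝ) 1) r)
    (hv'cont : ContinuousOn v' (Set.Icc (0:ℝ) 1))
    (hv'nonneg : ∀ r ∈ Set.Icc (0:ℝ) 1, 0 ≤ v' r)
    (hW : ∀ r ∈ Set.Ioo (0:ℝ) 1,
      HasDerivAt (fun s => s ^ (N - 1) * v' s ^ (p - 1))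
        (r ^ (N - 1) * (v r ^ (p - 1) - v r ^ (q - 1))) r) :
    AntitoneOn (fun r => (p - 1) / p * v' r ^ p - v r ^ p / p + v r ^ q / q)
      (Set.Icc (0:ℝ) 1) :=
  Lq_antitone_general N p q hp hpq v v' hv hv'cont hv'nonneg hW
end

section
/- Let N ≥ 1 be an integer, 1 < p < q, and let v be a radial Neumann solution with exponent q. Then L_q(r) := ((p−1)/p)·v'(r)^p − v(r)^p/p + v(r)^q/q ≤ 0 for every r ∈ [0,1]; equivalently, the point (v(r), v'(r)) lies in the region { (x,y) : x ≥ 0, 0 ≤ y ≤ [ (p/(p−1))·(x^p/p − x^q/q) ]^{1/p} }. -/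
open Real Set Filter intervalIntegral

/-!
Along a radial solution the energy `L_q = ((p-1)/p) v'^p - v^p/p + v^q/q` is nonincreasing:
by the equation its derivative is `-((N-1)/r) v'^p ≤ 0`. Since `v'(0) = 0`,
`L_q(0) = v(0)^q/q - v(0)^p/p`, which is nonpositive as soon as `v(0) ≤ 1`. That holds because the
flux `r^{N-1} v'^{p-1}` vanishes at `r = 0` and `r = 1`, so by Rolle `v^{p-1} = v^{q-1}`, i.e.
`v ≤ 1`, at some interior point, and `v` is nondecreasing. The bound on `v'` is `L_q ≤ 0` solved
for `v'`.
-/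

open scoped Topology

lemma rpow_div_le_rpow_div_of_le_one {x p q : ℝ} (hx₀ : 0 ≤ x) (hx₁ : x ≤ 1) (hp : 0 < p)
    (hpq : p ≤ q) : x ^ q / q ≤ x ^ p / p :=
  calc x ^ q / q ≤ x ^ p / q :=
        div_le_div_of_nonneg_right (rpow_le_rpow_of_exponent_ge' hx₀ hx₁ hp.le hpq)
          (hp.trans_le hpq).le
    _ ≤ x ^ p / p := div_le_div_of_nonneg_left (rpow_nonneg hx₀ _) hp hpq

lemma le_one_of_rpow_eq_rpow {x a b : ℝ} (hab : a < b) (h : x ^ a = x ^ b) : x ≤ 1 := by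
  by_contra! hx
  exact (rpow_lt_rpow_of_exponent_lt hx hab).ne h

lemma le_rpow_one_div_of_mul_rpow_le {y p a b : ℝ} (hy : 0 ≤ y) (hp : 0 < p) (ha : 0 < a)
    (h : a * y ^ p ≤ b) : y ≤ (a⁻¹ * b) ^ (1 / p) :=
  calc y = (y ^ p) ^ (1 / p) := by rw [one_div, rpow_rpow_inv hy hp.ne']
    _ ≤ (a⁻¹ * b) ^ (1 / p) :=
        rpow_le_rpow (rpow_nonneg hy p) ((le_inv_mul_iff₀ ha).mpr h) (by positivity)

theorem HasDerivAt.of_pow_mul {u : ℝ → ℝ} {n : ℕ} {r f : ℝ} (hr : r ≠ 0)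
    (h : HasDerivAt (fun s => s ^ n * u s) (r ^ n * f) r) :
    HasDerivAt u (f - n / r * u r) r := by
  have hquot := h.div (hasDerivAt_pow n r) (pow_ne_zero n hr)
  have hu : ((fun s => s ^ n * u s) / fun s => s ^ n) =ᶠ[𝓝 r] u := by
    filter_upwards [isOpen_ne.mem_nhds hr] with s hs
    exact mul_div_cancel_left₀ _ (pow_ne_zero n hs)
  refine (hquot.congr_of_eventuallyEq hu.symm).congr_deriv ?_
  rcases n with _ | n
  · simp
  · rw [Nat.add_sub_cancel]
    field_simp
    ring

theorem HasDerivAt.rpow_of_rpow_sub_one {y : ℝ → ℝ} {p r d : ℝ} (hp : 1 < p)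
    (hy : ∀ᶠ s in 𝓝 r, 0 ≤ y s) (h : HasDerivAt (fun s => y s ^ (p - 1)) d r) :
    HasDerivAt (fun s => y s ^ p) (p / (p - 1) * d * y r) r := by
  have hp₁ : p - 1 ≠ 0 := (sub_pos.mpr hp).ne'
  have hexp : (p - 1) * (p / (p - 1)) = p := by field_simp
  have hcomp := h.rpow_const (p := p / (p - 1))
    (Or.inr (by rw [le_div_iff₀ (by linarith)]; linarith))
  have hy_r : (y r ^ (p - 1)) ^ (p / (p - 1) - 1) = y r := by
    rw [← rpow_mul hy.self_of_nhds, show (p - 1) * (p / (p - 1) - 1) = 1 by field_simp; ring,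
      rpow_one]
  rw [hy_r] at hcomp
  refine (hcomp.congr_of_eventuallyEq ?_).congr_deriv (by ring)
  filter_upwards [hy] with s hs
  rw [← rpow_mul hs, hexp]

/-- The function `L_q` of the statement. -/
noncomputable def radialEnergy (p q : ℝ) (v v' : ℝ → ℝ) (r : ℝ) : ℝ :=
  (p - 1) / p * v' r ^ p - v r ^ p / p + v r ^ q / q

namespace IsRadialNeumannSol

variable {N : ℕ} {p q : ℝ} {v v' : ℝ → ℝ}

lemma apply_zero_le_one (h : IsRadialNeumannSol N p q v v') (hp : 1 < p) (hpq : p < q) :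
    v 0 ≤ 1 := by
  obtain ⟨-, hv'c, -, hmono, -, h0, h1, hflux⟩ := h
  have hp₁ : 0 < p - 1 := sub_pos.mpr hp
  have hfluxc : ContinuousOn (fun s : ℝ => s ^ (N - 1) * v' s ^ (p - 1)) (Icc 0 1) :=
    (continuousOn_pow _).mul (hv'c.rpow_const fun _ _ => Or.inr hp₁.le)
  obtain ⟨c, hc, hc0⟩ := exists_hasDerivAt_eq_zero zero_lt_one hfluxc
    (by simp [h0, h1, zero_rpow hp₁.ne']) hflux
  have hvc : v c ^ (p - 1) = v c ^ (q - 1) :=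
    sub_eq_zero.mp ((mul_eq_zero.mp hc0).resolve_left (pow_ne_zero _ hc.1.ne'))
  exact (hmono (left_mem_Icc.mpr zero_le_one) (Ioo_subset_Icc_self hc) hc.1.le).trans
    (le_one_of_rpow_eq_rpow (by linarith) hvc)

lemma hasDerivAt_radialEnergy (h : IsRadialNeumannSol N p q v v') (hp : 1 < p) (hq : q ≠ 0)
    {r : ℝ} (hr : r ∈ Ioo 0 1) :
    HasDerivAt (radialEnergy p q v v') (-((N - 1 : ℕ) / r * v' r ^ p)) r := by
  obtain ⟨hv, -, hpos, -, hv'nn, -, -, hflux⟩ := h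
  have hrI : r ∈ Icc 0 1 := Ioo_subset_Icc_self hr
  have hIcc : Icc (0 : ℝ) 1 ∈ 𝓝 r := Icc_mem_nhds hr.1 hr.2
  have hvr : HasDerivAt v (v' r) r := (hv r hrI).hasDerivAt hIcc
  have hvr₀ : v r ≠ 0 := (hpos r hrI).ne'
  have hv'p := ((hflux r hr).of_pow_mul hr.1.ne').rpow_of_rpow_sub_one hp
    (eventually_of_mem hIcc hv'nn)
  have hvp := (hvr.rpow_const (p := p) (Or.inl hvr₀)).div_const p
  have hvq := (hvr.rpow_const (p := q) (Or.inl hvr₀)).div_const q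
  refine (((hv'p.const_mul ((p - 1) / p)).sub hvp).add hvq).congr_deriv ?_
  have : p - 1 ≠ 0 := (sub_pos.mpr hp).ne'
  have : p ≠ 0 := by linarith
  have hpow : v' r ^ p = v' r * v' r ^ (p - 1) := by
    rw [← rpow_one_add' (hv'nn r hrI) (by simpa), add_sub_cancel]
  rw [hpow]
  field_simp
  ring

lemma continuousOn_radialEnergy (h : IsRadialNeumannSol N p q v v') (hp : 0 < p) :
    ContinuousOn (radialEnergy p q v v') (Icc 0 1) := by
  obtain ⟨hv, hv'c, hpos, -⟩ := h
  have hvpow (a : ℝ) : ContinuousOn (fun s => v s ^ a) (Icc 0 1) :=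
    ContinuousOn.rpow_const (fun s hs => (hv s hs).continuousWithinAt)
      fun s hs => Or.inl (hpos s hs).ne'
  exact ((continuousOn_const.mul (hv'c.rpow_const fun _ _ => Or.inr hp.le)).sub
    ((hvpow p).div_const p)).add ((hvpow q).div_const q)

lemma antitoneOn_radialEnergy (h : IsRadialNeumannSol N p q v v') (hp : 1 < p) (hq : q ≠ 0) :
    AntitoneOn (radialEnergy p q v v') (Icc 0 1) := by
  refine antitoneOn_of_hasDerivWithinAt_nonpos (f' := fun r => -((N - 1 : ℕ) / r * v' r ^ p))
    (convex_Icc 0 1) (h.continuousOn_radialEnergy (by linarith)) (fun r hr => ?_) fun r hr => ?_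
  · rw [interior_Icc] at hr
    exact (h.hasDerivAt_radialEnergy hp hq hr).hasDerivWithinAt
  · rw [interior_Icc] at hr
    obtain ⟨-, -, -, -, hv'nn, -⟩ := h
    exact neg_nonpos.mpr (mul_nonneg (div_nonneg (Nat.cast_nonneg _) hr.1.le)
      (rpow_nonneg (hv'nn r (Ioo_subset_Icc_self hr)) p))

lemma radialEnergy_zero_nonpos (h : IsRadialNeumannSol N p q v v') (hp : 1 < p) (hpq : p < q) :
    radialEnergy p q v v' 0 ≤ 0 := by
  have hv01 := h.apply_zero_le_one hp hpq
  obtain ⟨-, -, hpos, -, -, h0, -⟩ := h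
  have := rpow_div_le_rpow_div_of_le_one (hpos 0 (left_mem_Icc.mpr zero_le_one)).le hv01
    (by linarith) hpq.le
  simp only [radialEnergy, h0, zero_rpow (by linarith : p ≠ 0)]
  linarith

lemma radialEnergy_nonpos (h : IsRadialNeumannSol N p q v v') (hp : 1 < p) (hpq : p < q)
    {r : ℝ} (hr : r ∈ Icc 0 1) : radialEnergy p q v v' r ≤ 0 :=
  (h.antitoneOn_radialEnergy hp (by linarith) (left_mem_Icc.mpr zero_le_one) hr hr.1).trans
    (h.radialEnergy_zero_nonpos hp hpq)

end IsRadialNeumannSol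

theorem Lq_nonpos_general
    (N : ℕ) (p q : ℝ) (hp : 1 < p) (hpq : p < q)
    (v v' : ℝ → ℝ) (hsol : IsRadialNeumannSol N p q v v') :
    ∀ r ∈ Set.Icc (0:ℝ) 1,
      (p - 1) / p * v' r ^ p - v r ^ p / p + v r ^ q / q ≤ 0 ∧
      (0 ≤ v r ∧ 0 ≤ v' r ∧
        v' r ≤ (p / (p - 1) * (v r ^ p / p - v r ^ q / q)) ^ (1 / p)) := by
  intro r hr
  have hL : radialEnergy p q v v' r ≤ 0 := hsol.radialEnergy_nonpos hp hpq hr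
  obtain ⟨-, -, hpos, -, hv'nn, -⟩ := hsol
  refine ⟨hL, (hpos r hr).le, hv'nn r hr, ?_⟩
  rw [← inv_div]
  exact le_rpow_one_div_of_mul_rpow_le (hv'nn r hr) (by linarith)
    (div_pos (by linarith) (by linarith)) (by unfold radialEnergy at hL; linarith)

/-- For a radial Neumann solution `v`, the quantity
`L_q(r) = ((p-1)/p) v'(r)^p - v(r)^p/p + v(r)^q/q` is nonpositive on `[0,1]`;
equivalently, `(v(r), v'(r))` lies in the region
`{(x,y) : x ≥ 0, 0 ≤ y ≤ [(p/(p-1))(x^p/p - x^q/q)]^{1/p}}`. -/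
theorem Lq_nonpos
    (N : ℕ) (hN : 1 ≤ N) (p q : ℝ) (hp : 1 < p) (hpq : p < q)
    (v v' : ℝ → ℝ) (hsol : IsRadialNeumannSol N p q v v') :
    ∀ r ∈ Set.Icc (0:ℝ) 1,
      (p - 1) / p * v' r ^ p - v r ^ p / p + v r ^ q / q ≤ 0 ∧
      (0 ≤ v r ∧ 0 ≤ v' r ∧
        v' r ≤ (p / (p - 1) * (v r ^ p / p - v r ^ q / q)) ^ (1 / p)) :=
  Lq_nonpos_general N p q hp hpq v v' hsol
end

section
/- Let N ≥ 1 be an integer and 1 < p. Suppose (q_n) is a sequence of reals with q_n > p and q_n → ∞, and for each n let v_n be a radial Neumann solution with exponent q_n that is not identically equal to the constant 1. Then v_n(1) → 1 and (1/q_n)·∫_0^1 r^{N−1}·v_n(r)^{q_n} dr → 0 as n → ∞. -/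
open Real Set Filter intervalIntegral

noncomputable def Kc (N : ℕ) (p : ℝ) : ℝ := ((2:ℝ)^(N-1)) ^ ((p-1)⁻¹)
noncomputable def cc (a : ℝ) : ℝ := (1 + a⁻¹)/2
noncomputable def dd (N : ℕ) (p a : ℝ) : ℝ := (1 - cc a) / Kc N p
noncomputable def CC (N : ℕ) (p a : ℝ) : ℝ :=
  (2:ℝ)^(N-1) * ((cc a)⁻¹) ^ (p-1) / dd N p a

theorem sol_key (N : ℕ) (hN : 1 ≤ N) (p q : ℝ) (hp : 1 < p) (hq : p < q)
    (v v' : ℝ → ℝ) (hsol : IsRadialNeumannSol N p q v v')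
    (hne1 : ¬ ∀ r ∈ Set.Icc (0:ℝ) 1, v r = 1) :
    1 < v 1 ∧
    0 ≤ (∫ r in (0:ℝ)..1, r ^ (N-1) * v r ^ q) ∧
    (∫ r in (0:ℝ)..1, r ^ (N-1) * v r ^ q) ≤ (v 1) ^ p ∧
    ∀ a : ℝ, 1 < a → v 1 < a ∨ (cc a * a) ^ (q - p) ≤ CC N p a := by
  obtain ⟨hd, hc', hpos, hmono, h'nn, h'0, h'1, hW⟩ := hsol
  have hp1 : (0:ℝ) < p - 1 := by linarith
  have hq1 : (0:ℝ) < q - 1 := by linarith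
  have hqp : (0:ℝ) < q - p := by linarith
  have h01 : (0:ℝ) ∈ Icc (0:ℝ) 1 := ⟨le_rfl, zero_le_one⟩
  have h11 : (1:ℝ) ∈ Icc (0:ℝ) 1 := ⟨zero_le_one, le_rfl⟩
  have hvc : ContinuousOn v (Icc 0 1) := fun r hr => (hd r hr).continuousWithinAt
  -- continuity of the power integrands
  have hcont_pow : ∀ e : ℝ, ContinuousOn (fun s => s ^ (N-1) * v s ^ e) (Icc 0 1) := by
    intro e
    exact (continuous_pow _).continuousOn.mul
      (hvc.rpow_const fun x hx => Or.inl (hpos x hx).ne')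
  have hIe : ∀ (e : ℝ) (x y : ℝ), x ∈ Icc (0:ℝ) 1 → y ∈ Icc (0:ℝ) 1 →
      IntervalIntegrable (fun s => s ^ (N-1) * v s ^ e) MeasureTheory.volume x y := by
    intro e x y hx hy
    exact ((hcont_pow e).mono (uIcc_subset_Icc hx hy)).intervalIntegrable
  -- W
  set W : ℝ → ℝ := fun s => s ^ (N-1) * v' s ^ (p-1) with hWdef
  have hWc : ContinuousOn W (Icc 0 1) :=
    (continuous_pow _).continuousOn.mul (hc'.rpow_const fun x _ => Or.inr hp1.le)
  have hW0 : W 0 = 0 := by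
    simp [hWdef, h'0, Real.zero_rpow hp1.ne']
  have hW1 : W 1 = 0 := by
    simp [hWdef, h'1, Real.zero_rpow hp1.ne']
  -- g, the derivative of W
  set g : ℝ → ℝ := fun s => s ^ (N-1) * (v s ^ (p-1) - v s ^ (q-1)) with hgdef
  have hgc : ContinuousOn g (Icc 0 1) := by
    have : ∀ s, g s = s ^ (N-1) * v s ^ (p-1) - s ^ (N-1) * v s ^ (q-1) := fun s => by
      simp [hgdef]; ring
    rw [show g = fun s => s ^ (N-1) * v s ^ (p-1) - s ^ (N-1) * v s ^ (q-1) from funext this]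
    exact (hcont_pow (p-1)).sub (hcont_pow (q-1))
  have hgint : ∀ x y : ℝ, x ∈ Icc (0:ℝ) 1 → y ∈ Icc (0:ℝ) 1 →
      IntervalIntegrable g MeasureTheory.volume x y := fun x y hx hy =>
    ((hgc.mono (uIcc_subset_Icc hx hy))).intervalIntegrable
  -- FTC for W on [r,1]
  have hWeq : ∀ r ∈ Icc (0:ℝ) 1, W 1 - W r = ∫ s in r..1, g s := by
    intro r hr
    refine (intervalIntegral.integral_eq_sub_of_hasDerivAt_of_le hr.2
      (hWc.mono (Icc_subset_Icc hr.1 le_rfl)) ?_ (hgint r 1 hr h11)).symm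
    intro x hx
    exact hW x ⟨lt_of_le_of_lt hr.1 hx.1, hx.2⟩
  have E1 : (∫ s in (0:ℝ)..1, g s) = 0 := by
    have := hWeq 0 h01
    rw [hW0, hW1] at this
    linarith
  -- I_q = I_p
  have F1 : (∫ s in (0:ℝ)..1, s^(N-1) * v s^(q-1)) = ∫ s in (0:ℝ)..1, s^(N-1) * v s^(p-1) := by
    have h := intervalIntegral.integral_sub (hIe (p-1) 0 1 h01 h11) (hIe (q-1) 0 1 h01 h11)
    have h2 : (∫ s in (0:ℝ)..1,
        (s^(N-1) * v s^(p-1) - s^(N-1) * v s^(q-1))) = ∫ s in (0:ℝ)..1, g s := by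
      apply intervalIntegral.integral_congr
      intro x _
      simp only [hgdef]
      ring
    rw [h, E1] at h2
    linarith
  -- 1 < v 1
  have hM1 : 1 < v 1 := by
    by_contra hle
    push_neg at hle
    have hvle : ∀ r ∈ Icc (0:ℝ) 1, v r ≤ 1 := fun r hr => (hmono hr h11 hr.2).trans hle
    have hg_nonneg : ∀ s ∈ Icc (0:ℝ) 1, 0 ≤ g s := by
      intro s hs
      have h1 : v s ^ (q-1) ≤ v s ^ (p-1) :=
        Real.rpow_le_rpow_of_exponent_ge (hpos s hs) (hvle s hs) (by linarith)
      have : (0:ℝ) ≤ s ^ (N-1) := pow_nonneg hs.1 _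
      simp only [hgdef]
      exact mul_nonneg this (by linarith)
    by_cases hall : ∀ r ∈ Ioo (0:ℝ) 1, v r = 1
    · -- v ≡ 1, contradiction with hne1
      have hhalf : v (1/2 : ℝ) = 1 := hall _ (by norm_num)
      have hv1 : v 1 = 1 := by
        have h5 := hmono (by norm_num : (1/2:ℝ) ∈ Icc (0:ℝ) 1) h11 (by norm_num)
        rw [hhalf] at h5
        exact le_antisymm hle h5
      have hv0 : v 0 = 1 := by
        have hclos : (0:ℝ) ∈ closure (Ioo (0:ℝ) 1) := by
          rw [closure_Ioo (by norm_num : (0:ℝ) ≠ 1)]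
          exact h01
        haveI : (nhdsWithin (0:ℝ) (Ioo (0:ℝ) 1)).NeBot :=
          mem_closure_iff_nhdsWithin_neBot.mp hclos
        have t1 : Tendsto v (nhdsWithin (0:ℝ) (Ioo (0:ℝ) 1)) (nhds (v 0)) :=
          (hvc 0 h01).mono_left (nhdsWithin_mono _ Ioo_subset_Icc_self)
        have t2 : Tendsto v (nhdsWithin (0:ℝ) (Ioo (0:ℝ) 1)) (nhds 1) := by
          refine Tendsto.congr' ?_ tendsto_const_nhds
          filter_upwards [self_mem_nhdsWithin] with x hx
          exact (hall x hx).symm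
        exact tendsto_nhds_unique t1 t2
      apply hne1
      intro r hr
      rcases eq_or_lt_of_le hr.1 with h0 | h0
      · rw [← h0]; exact hv0
      rcases eq_or_lt_of_le hr.2 with h1 | h1
      · rw [h1]; exact hv1
      exact hall r ⟨h0, h1⟩
    · push_neg at hall
      obtain ⟨r₁, hr₁, hvr₁⟩ := hall
      have hr₁m : r₁ ∈ Icc (0:ℝ) 1 := Ioo_subset_Icc_self hr₁
      have hvr₁lt : v r₁ < 1 := lt_of_le_of_ne (hvle r₁ hr₁m) hvr₁
      have hpos_int : 0 < ∫ s in (0:ℝ)..r₁, g s := by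
        refine intervalIntegral_pos_of_pos_on (hgint 0 r₁ h01 hr₁m) ?_ hr₁.1
        intro x hx
        have hxm : x ∈ Icc (0:ℝ) 1 := ⟨hx.1.le, hx.2.le.trans hr₁.2.le⟩
        have hvx : v x < 1 :=
          lt_of_le_of_lt (hmono hxm hr₁m hx.2.le) hvr₁lt
        have h1 : v x ^ (q-1) < v x ^ (p-1) :=
          Real.rpow_lt_rpow_of_exponent_gt (hpos x hxm) hvx (by linarith)
        have h2 : (0:ℝ) < x ^ (N-1) := pow_pos hx.1 _
        simp only [hgdef]
        exact mul_pos h2 (by linarith)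
      have hsplit : (∫ s in (0:ℝ)..r₁, g s) + (∫ s in r₁..1, g s) = ∫ s in (0:ℝ)..1, g s :=
        intervalIntegral.integral_add_adjacent_intervals (hgint 0 r₁ h01 hr₁m) (hgint r₁ 1 hr₁m h11)
      have hnn2 : 0 ≤ ∫ s in r₁..1, g s := by
        refine intervalIntegral.integral_nonneg hr₁.2.le ?_
        intro u hu
        exact hg_nonneg u ⟨hr₁.1.le.trans hu.1, hu.2⟩
      rw [E1] at hsplit
      linarith
  have hM0 : 0 < v 1 := hpos 1 h11
  have hNsub : N - 1 + 1 = N := Nat.succ_pred_eq_of_pos hN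
  have hNpos : (0:ℝ) < (N:ℝ) := by exact_mod_cast hN
  have hfq_nn : ∀ x y : ℝ, x ∈ Icc (0:ℝ) 1 → y ∈ Icc (0:ℝ) 1 → x ≤ y → ∀ e : ℝ,
      0 ≤ ∫ s in x..y, s^(N-1) * v s^e := by
    intro x y hx hy hxy e
    refine intervalIntegral.integral_nonneg hxy ?_
    intro u hu
    have hum : u ∈ Icc (0:ℝ) 1 := ⟨hx.1.trans hu.1, hu.2.trans hy.2⟩
    exact mul_nonneg (pow_nonneg hum.1 _) (Real.rpow_nonneg (hpos u hum).le _)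
  -- I_p ≤ (v 1)^(p-1)
  have F2 : (∫ s in (0:ℝ)..1, s^(N-1) * v s^(p-1)) ≤ (v 1)^(p-1) := by
    have hCnn : 0 ≤ (v 1)^(p-1) := Real.rpow_nonneg hM0.le _
    have hmle : (∫ s in (0:ℝ)..1, s^(N-1) * v s^(p-1))
        ≤ ∫ s in (0:ℝ)..1, s^(N-1) * (v 1)^(p-1) := by
      refine intervalIntegral.integral_mono_on zero_le_one (hIe (p-1) 0 1 h01 h11)
        (((continuous_pow (N-1)).mul continuous_const).intervalIntegrable 0 1) ?_
      intro x hx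
      exact mul_le_mul_of_nonneg_left
        (Real.rpow_le_rpow (hpos x hx).le (hmono hx h11 hx.2) hp1.le) (pow_nonneg hx.1 _)
    have heval : (∫ s in (0:ℝ)..1, s^(N-1) * (v 1)^(p-1)) = (1/(N:ℝ)) * (v 1)^(p-1) := by
      rw [intervalIntegral.integral_mul_const, integral_pow]
      rw [hNsub]
      rw [one_pow, zero_pow (by omega : N ≠ 0), Nat.cast_sub hN]
      ring
    have hfrac : (1/(N:ℝ)) * (v 1)^(p-1) ≤ 1 * (v 1)^(p-1) := by
      refine mul_le_mul_of_nonneg_right ?_ hCnn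
      rw [div_le_one hNpos]
      exact_mod_cast hN
    rw [heval] at hmle
    linarith
  -- W r ≤ I_q
  have hWle : ∀ r ∈ Icc (0:ℝ) 1, W r ≤ ∫ s in (0:ℝ)..1, s^(N-1) * v s^(q-1) := by
    intro r hr
    have h := hWeq r hr
    rw [hW1] at h
    have hsubg : (∫ s in r..1, g s) = (∫ s in r..1, s^(N-1) * v s^(p-1))
        - ∫ s in r..1, s^(N-1) * v s^(q-1) := by
      rw [← intervalIntegral.integral_sub (hIe (p-1) r 1 hr h11) (hIe (q-1) r 1 hr h11)]
      apply intervalIntegral.integral_congr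
      intro x _
      simp only [hgdef]
      ring
    have hfp : 0 ≤ ∫ s in r..1, s^(N-1) * v s^(p-1) := hfq_nn r 1 hr h11 hr.2 (p-1)
    have h0r : 0 ≤ ∫ s in (0:ℝ)..r, s^(N-1) * v s^(q-1) := hfq_nn 0 r h01 hr hr.1 (q-1)
    have hsplit : (∫ s in (0:ℝ)..r, s^(N-1) * v s^(q-1)) + (∫ s in r..1, s^(N-1) * v s^(q-1))
        = ∫ s in (0:ℝ)..1, s^(N-1) * v s^(q-1) :=
      intervalIntegral.integral_add_adjacent_intervals
        (hIe (q-1) 0 r h01 hr) (hIe (q-1) r 1 hr h11)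
    rw [hsubg] at h
    linarith
  have hKpos : 0 < Kc N p := Real.rpow_pos_of_pos (by positivity) _
  -- derivative bound
  have F3 : ∀ r ∈ Icc (1/2:ℝ) 1, v' r ≤ Kc N p * v 1 := by
    intro r hr
    have hrm : r ∈ Icc (0:ℝ) 1 := ⟨by linarith [hr.1], hr.2⟩
    have h1 : W r ≤ (v 1)^(p-1) := by
      refine (hWle r hrm).trans ?_
      rw [F1]; exact F2
    have hXnn : 0 ≤ v' r ^ (p-1) := Real.rpow_nonneg (h'nn r hrm) _
    have h2 : (1/2:ℝ)^(N-1) * v' r ^ (p-1) ≤ W r := by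
      simp only [hWdef]
      exact mul_le_mul_of_nonneg_right (pow_le_pow_left₀ (by norm_num) hr.1 _) hXnn
    have h3 : v' r ^ (p-1) ≤ 2^(N-1) * (v 1)^(p-1) := by
      have e1 : v' r ^ (p-1) = 2^(N-1) * ((1/2:ℝ)^(N-1) * v' r ^ (p-1)) := by
        rw [← mul_assoc, ← mul_pow]
        norm_num
      rw [e1]
      exact mul_le_mul_of_nonneg_left (by linarith) (by positivity)
    have h4 : (Kc N p * v 1)^(p-1) = 2^(N-1) * (v 1)^(p-1) := by
      rw [Real.mul_rpow hKpos.le hM0.le, Kc, Real.rpow_inv_rpow (by positivity) hp1.ne']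
    by_contra hcon
    push_neg at hcon
    have h5 := Real.rpow_lt_rpow (by positivity) hcon hp1
    rw [h4] at h5
    linarith
  -- mean value bound
  have F4 : ∀ δ : ℝ, 0 < δ → δ ≤ 1/2 → v 1 - δ * (Kc N p * v 1) ≤ v (1-δ) := by
    intro δ hδ0 hδ2
    have h1δ : (1-δ:ℝ) ∈ Icc (0:ℝ) 1 := ⟨by linarith, by linarith⟩
    have hsub : Icc (1-δ) 1 ⊆ Icc (0:ℝ) 1 := Icc_subset_Icc (by linarith) le_rfl
    have hintv' : IntervalIntegrable v' MeasureTheory.volume (1-δ) 1 :=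
      ((hc'.mono (uIcc_subset_Icc h1δ h11))).intervalIntegrable
    have heq : (∫ s in (1-δ)..1, v' s) = v 1 - v (1-δ) := by
      refine intervalIntegral.integral_eq_sub_of_hasDerivAt_of_le (by linarith)
        (hvc.mono hsub) ?_ hintv'
      intro x hx
      exact (hd x ⟨by linarith [hx.1], hx.2.le⟩).hasDerivAt
        (Icc_mem_nhds (by linarith [hx.1]) hx.2)
    have hbd : (∫ s in (1-δ)..1, v' s) ≤ ∫ _s in (1-δ)..1, (Kc N p * v 1) := by
      refine intervalIntegral.integral_mono_on (by linarith) hintv'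
        intervalIntegrable_const ?_
      intro x hx
      exact F3 x ⟨by linarith [hx.1], hx.2⟩
    rw [intervalIntegral.integral_const, smul_eq_mul] at hbd
    have he : (1 - (1-δ)) = δ := by ring
    rw [he] at hbd
    linarith [heq ▸ hbd]
  -- lower bound of I_q
  have F5 : ∀ δ : ℝ, 0 < δ → δ ≤ 1/2 →
      (1/2:ℝ)^(N-1) * v (1-δ) ^ (q-1) * δ ≤ ∫ s in (0:ℝ)..1, s^(N-1) * v s^(q-1) := by
    intro δ hδ0 hδ2
    have h1δ : (1-δ:ℝ) ∈ Icc (0:ℝ) 1 := ⟨by linarith, by linarith⟩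
    have hsplit := intervalIntegral.integral_add_adjacent_intervals
      (hIe (q-1) 0 (1-δ) h01 h1δ) (hIe (q-1) (1-δ) 1 h1δ h11)
    have h0 : 0 ≤ ∫ s in (0:ℝ)..(1-δ), s^(N-1) * v s^(q-1) :=
      hfq_nn 0 (1-δ) h01 h1δ (by linarith) (q-1)
    have hconst : (∫ _s in (1-δ)..1, ((1/2:ℝ)^(N-1) * v (1-δ)^(q-1)))
        ≤ ∫ s in (1-δ)..1, s^(N-1) * v s^(q-1) := by
      refine intervalIntegral.integral_mono_on (by linarith) intervalIntegrable_const
        (hIe (q-1) (1-δ) 1 h1δ h11) ?_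
      intro x hx
      have hxm : x ∈ Icc (0:ℝ) 1 := ⟨by linarith [hx.1], hx.2⟩
      refine mul_le_mul (pow_le_pow_left₀ (by norm_num) (by linarith [hx.1]) _)
        (Real.rpow_le_rpow (hpos _ h1δ).le (hmono h1δ hxm hx.1) hq1.le)
        (Real.rpow_nonneg (hpos _ h1δ).le _) (pow_nonneg (by linarith [hx.1]) _)
    rw [intervalIntegral.integral_const, smul_eq_mul] at hconst
    have he : (1 - (1-δ)) = δ := by ring
    rw [he] at hconst
    have he2 : (1/2:ℝ)^(N-1) * v (1-δ) ^ (q-1) * δ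
        = δ * ((1/2:ℝ)^(N-1) * v (1-δ)^(q-1)) := by ring
    linarith [he2 ▸ hconst]
  refine ⟨hM1, hfq_nn 0 1 h01 h11 zero_le_one q, ?_, ?_⟩
  · -- J ≤ (v 1)^p
    have hJle : (∫ s in (0:ℝ)..1, s^(N-1) * v s ^ q)
        ≤ ∫ s in (0:ℝ)..1, v 1 * (s^(N-1) * v s^(q-1)) := by
      refine intervalIntegral.integral_mono_on zero_le_one (hIe q 0 1 h01 h11)
        ((hIe (q-1) 0 1 h01 h11).const_mul (v 1)) ?_
      intro x hx
      have h1 : v x ≤ v 1 := hmono hx h11 hx.2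
      have hnn : 0 ≤ x^(N-1) * v x^(q-1) :=
        mul_nonneg (pow_nonneg hx.1 _) (Real.rpow_nonneg (hpos x hx).le _)
      have e1 : x^(N-1) * v x ^ q = (x^(N-1) * v x^(q-1)) * v x := by
        rw [show q = (q-1)+1 from by ring, Real.rpow_add (hpos x hx), Real.rpow_one]
        ring
      rw [e1]
      calc (x^(N-1) * v x^(q-1)) * v x ≤ (x^(N-1) * v x^(q-1)) * v 1 :=
            mul_le_mul_of_nonneg_left h1 hnn
        _ = v 1 * (x^(N-1) * v x^(q-1)) := mul_comm _ _
    rw [intervalIntegral.integral_const_mul, F1] at hJle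
    have h2 := mul_le_mul_of_nonneg_left F2 hM0.le
    have h3 : v 1 ^ p = v 1 * v 1 ^ (p-1) := by
      have h4 := Real.rpow_add hM0 1 (p-1)
      rw [show (1:ℝ) + (p-1) = p from by ring, Real.rpow_one] at h4
      exact h4
    linarith
  · -- the quantitative alternative
    intro a ha
    by_cases hMa : v 1 < a
    · exact Or.inl hMa
    right
    push_neg at hMa
    have ha0 : (0:ℝ) < a := by linarith
    have hainv : 0 < a⁻¹ := inv_pos.2 ha0
    have hainv1 : a⁻¹ < 1 := by
      have h := (div_lt_one ha0).mpr ha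
      rwa [one_div] at h
    have hcc_lt1 : cc a < 1 := by rw [cc]; linarith
    have hcc_gt : 1/2 < cc a := by rw [cc]; linarith
    have hccpos : (0:ℝ) < cc a := by linarith
    have h2N : (1:ℝ) ≤ 2^(N-1) := one_le_pow₀ (by norm_num)
    have hK1 : 1 ≤ Kc N p := Real.one_le_rpow h2N (inv_nonneg.2 hp1.le)
    set δ := dd N p a with hδdef
    have hδpos : 0 < δ := div_pos (by linarith) hKpos
    have hδhalf : δ ≤ 1/2 := by
      have h1 : δ ≤ (1 - cc a) / 1 :=
        div_le_div_of_nonneg_left (by linarith) one_pos hK1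
      rw [div_one] at h1
      linarith
    have hKδ : Kc N p * δ = 1 - cc a := by
      rw [hδdef, dd]
      field_simp
    have hlow : cc a * v 1 ≤ v (1-δ) := by
      have h4 := F4 δ hδpos hδhalf
      have e : δ * (Kc N p * v 1) = (1 - cc a) * v 1 := by rw [← hKδ]; ring
      rw [e] at h4
      nlinarith
    set t := cc a * v 1 with htdef
    have htpos : 0 < t := mul_pos hccpos hM0
    have htp : 0 < t ^ (p-1) := Real.rpow_pos_of_pos htpos _
    have hchain : (1/2:ℝ)^(N-1) * t^(q-1) * δ ≤ (v 1)^(p-1) := by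
      have h5 := F5 δ hδpos hδhalf
      have hmr : t^(q-1) ≤ v (1-δ)^(q-1) := Real.rpow_le_rpow htpos.le hlow hq1.le
      have h6 : (1/2:ℝ)^(N-1) * t^(q-1) * δ ≤ (1/2:ℝ)^(N-1) * v (1-δ)^(q-1) * δ :=
        mul_le_mul_of_nonneg_right (mul_le_mul_of_nonneg_left hmr (by positivity)) hδpos.le
      rw [F1] at h5
      linarith
    have hsplit_t : t^(q-1) = t^(q-p) * t^(p-1) := by
      rw [← Real.rpow_add htpos, show q - p + (p-1) = q - 1 from by ring]
    have hMt : (v 1)^(p-1) = ((cc a)⁻¹)^(p-1) * t^(p-1) := by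
      rw [← Real.mul_rpow (inv_nonneg.2 hccpos.le) htpos.le]
      congr 1
      rw [htdef]
      field_simp
    have step : (1/2:ℝ)^(N-1) * t^(q-p) * δ ≤ ((cc a)⁻¹)^(p-1) := by
      have h6 : ((1/2:ℝ)^(N-1) * t^(q-p) * δ) * t^(p-1)
          ≤ (((cc a)⁻¹)^(p-1)) * t^(p-1) := by
        calc ((1/2:ℝ)^(N-1) * t^(q-p) * δ) * t^(p-1)
            = (1/2:ℝ)^(N-1) * t^(q-1) * δ := by rw [hsplit_t]; ring
          _ ≤ (v 1)^(p-1) := hchain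
          _ = (((cc a)⁻¹)^(p-1)) * t^(p-1) := hMt
      exact le_of_mul_le_mul_right h6 htp
    have hfin : t^(q-p) ≤ CC N p a := by
      have h7 : (2:ℝ)^(N-1) * ((1/2:ℝ)^(N-1) * t^(q-p) * δ)
          ≤ (2:ℝ)^(N-1) * ((cc a)⁻¹)^(p-1) :=
        mul_le_mul_of_nonneg_left step (by positivity)
      have e : (2:ℝ)^(N-1) * ((1/2:ℝ)^(N-1) * t^(q-p) * δ) = t^(q-p) * δ := by
        rw [← mul_assoc, ← mul_assoc, ← mul_pow]
        norm_num
      rw [e] at h7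
      rw [CC, ← hδdef]
      exact (le_div_iff₀ hδpos).2 h7
    have hbase : (cc a * a)^(q-p) ≤ t^(q-p) :=
      Real.rpow_le_rpow (by positivity) (mul_le_mul_of_nonneg_left hMa hccpos.le) hqp.le
    exact hbase.trans hfin

/-- For non-constant radial Neumann solutions `v_n` with exponents `q_n → ∞`:
`v_n(1) → 1` and `(1/q_n)∫₀¹ r^{N-1} v_n^{q_n} dr → 0`. -/
theorem boundary_value_and_q_integral_limit
    (N : ℕ) (hN : 1 ≤ N) (p : ℝ) (hp : 1 < p)
    (q : ℕ → ℝ) (hq : ∀ n, p < q n) (hqtop : Tendsto q atTop atTop)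
    (v v' : ℕ → ℝ → ℝ)
    (hsol : ∀ n, IsRadialNeumannSol N p (q n) (v n) (v' n))
    (hne1 : ∀ n, ¬ ∀ r ∈ Set.Icc (0:ℝ) 1, v n r = 1) :
    Tendsto (fun n => v n 1) atTop (nhds 1) ∧
    Tendsto (fun n => (1 / q n) * ∫ r in (0:ℝ)..1, r ^ (N - 1) * v n r ^ q n)
      atTop (nhds 0) := by
  -- proof
  have key := fun n => sol_key N hN p (q n) hp (hq n) (v n) (v' n) (hsol n) (hne1 n)
  have hqpos : ∀ n, 0 < q n := fun n => lt_trans (lt_trans one_pos hp) (hq n)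
  have hA : Tendsto (fun n => v n 1) atTop (nhds 1) := by
    rw [tendsto_order]
    constructor
    · intro a' ha'
      exact Eventually.of_forall fun n => lt_trans ha' (key n).1
    · intro a ha
      have ha0 : (0:ℝ) < a := by linarith
      have hcca : cc a * a = (a+1)/2 := by
        rw [cc]
        field_simp
      have hbase : 1 < cc a * a := by rw [hcca]; linarith
      have hsub : Tendsto (fun n => q n - p) atTop atTop := by
        simpa [sub_eq_add_neg] using tendsto_atTop_add_const_right atTop (-p) hqtop
      have h8 : Tendsto (fun n => (cc a * a) ^ (q n - p)) atTop atTop := by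
        have hb0 : (0:ℝ) < cc a * a := by linarith
        have hlog : 0 < Real.log (cc a * a) := Real.log_pos hbase
        have h9 : Tendsto (fun n => Real.exp ((q n - p) * Real.log (cc a * a)))
            atTop atTop :=
          Real.tendsto_exp_atTop.comp (hsub.atTop_mul_const hlog)
        refine h9.congr fun n => ?_
        rw [Real.rpow_def_of_pos hb0, mul_comm]
      filter_upwards [h8.eventually_gt_atTop (CC N p a)] with n hn
      rcases (key n).2.2.2 a ha with h | h
      · exact h
      · exact absurd h (not_le.2 hn)
  refine ⟨hA, ?_⟩
  have hev2 : ∀ᶠ n in atTop, v n 1 < 2 := hA.eventually_lt_const (by norm_num)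
  refine squeeze_zero' ?_ ?_ (g := fun n => (1 / q n) * (2:ℝ)^p) ?_
  · exact Eventually.of_forall fun n =>
      mul_nonneg (one_div_nonneg.2 (hqpos n).le) (key n).2.1
  · filter_upwards [hev2] with n hn
    refine mul_le_mul_of_nonneg_left ((key n).2.2.1.trans ?_) (one_div_nonneg.2 (hqpos n).le)
    exact Real.rpow_le_rpow (le_trans zero_le_one (key n).1.le) hn.le (by linarith)
  · have h9 : Tendsto (fun n => (q n)⁻¹ * (2:ℝ)^p) atTop (nhds (0 * (2:ℝ)^p)) :=
      (tendsto_inv_atTop_zero.comp hqtop).mul_const _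
    simpa [one_div] using h9
end

section
/- Let N ≥ 1 be an integer and 1 < p < 2. Suppose (q_n) is a sequence of reals with q_n > p and q_n → ∞, and for each n let v_n be a radial Neumann solution with exponent q_n. Assume v_n → v_∞ uniformly on [0,1] for some continuous function v_∞, and that there exists R ∈ (0,1) with v_∞(r) < 1 for all r ∈ [0,R]. Then v_∞ is differentiable at every r ∈ (0,R], and for every δ ∈ (0,R) the derivatives v_n' converge to v_∞' uniformly on [δ,R]. -/
open Real Set Filter intervalIntegral
open Topology


lemma my_rpow_add_le {a b α : ℝ} (ha : 0 ≤ a) (hb : 0 ≤ b) (hα0 : 0 ≤ α) (hα1 : α ≤ 1) :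
    (a + b) ^ α ≤ a ^ α + b ^ α := by
  lift a to NNReal using ha
  lift b to NNReal using hb
  have := NNReal.rpow_add_le_add_rpow a b hα0 hα1
  exact_mod_cast this

lemma my_rpow_holder {x y α : ℝ} (hx : 0 ≤ x) (hy : 0 ≤ y) (hα0 : 0 < α) (hα1 : α ≤ 1) :
    |x ^ α - y ^ α| ≤ |x - y| ^ α := by
  wlog h : y ≤ x generalizing x y
  · rw [abs_sub_comm, abs_sub_comm x y]; exact this hy hx (le_of_not_ge h)
  have h1 : x ^ α ≤ (x - y) ^ α + y ^ α := by
    have := my_rpow_add_le (sub_nonneg.2 h) hy hα0.le hα1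
    simpa using this
  have h2 : y ^ α ≤ x ^ α := Real.rpow_le_rpow hy h hα0.le
  rw [abs_of_nonneg (sub_nonneg.2 h2), abs_of_nonneg (sub_nonneg.2 h)]
  linarith

/-- composing a uniformly convergent sequence with a function continuous on a compact set
containing the values. -/
lemma my_comp_unif {φ : ℝ → ℝ} {K : Set ℝ} (hK : IsCompact K) (hφ : ContinuousOn φ K)
    {F : ℕ → ℝ → ℝ} {f : ℝ → ℝ} {s : Set ℝ}
    (hF : ∀ᶠ n in atTop, ∀ x ∈ s, F n x ∈ K) (hfm : ∀ x ∈ s, f x ∈ K)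
    (h : TendstoUniformlyOn F f atTop s) :
    TendstoUniformlyOn (fun n x => φ (F n x)) (fun x => φ (f x)) atTop s := by
  have huc : UniformContinuousOn φ K := hK.uniformContinuousOn_of_continuous hφ
  rw [Metric.uniformContinuousOn_iff] at huc
  rw [Metric.tendstoUniformlyOn_iff] at h ⊢
  intro ε hε
  obtain ⟨δ, hδ, hd⟩ := huc ε hε
  filter_upwards [h δ hδ, hF] with n hn hKn x hx
  exact hd (f x) (hfm x hx) (F n x) (hKn x hx) (hn x hx)

lemma my_formula (N : ℕ) (p qq : ℝ) (hp1 : 1 < p) (v v' : ℝ → ℝ)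
    (hd : ∀ r ∈ Set.Icc (0:ℝ) 1, HasDerivWithinAt v (v' r) (Set.Icc (0:ℝ) 1) r)
    (hc' : ContinuousOn v' (Set.Icc (0:ℝ) 1))
    (hpos : ∀ r ∈ Set.Icc (0:ℝ) 1, 0 < v r)
    (hnn : ∀ r ∈ Set.Icc (0:ℝ) 1, 0 ≤ v' r)
    (h0 : v' 0 = 0)
    (hode : ∀ r ∈ Set.Ioo (0:ℝ) 1,
      HasDerivAt (fun s => s ^ (N - 1) * v' s ^ (p - 1))
        (r ^ (N - 1) * (v r ^ (p - 1) - v r ^ (qq - 1))) r)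
    {r : ℝ} (hr : r ∈ Set.Ioo (0:ℝ) 1) :
    (∫ s in (0:ℝ)..r, s ^ (N - 1) * (v s ^ (p - 1) - v s ^ (qq - 1))) / r ^ (N - 1)
      = v' r ^ (p - 1) := by
  have hp0 : (0:ℝ) < p - 1 := by linarith
  have hpne : p - 1 ≠ 0 := ne_of_gt hp0
  have hrpos : 0 < r := hr.1
  have hsub : Set.Icc (0:ℝ) r ⊆ Set.Icc (0:ℝ) 1 := Set.Icc_subset_Icc le_rfl hr.2.le
  have hvcont : ContinuousOn v (Set.Icc (0:ℝ) 1) := fun x hx => (hd x hx).continuousWithinAt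
  -- continuity of the integrand
  have hintcont : ContinuousOn
      (fun s => s ^ (N - 1) * (v s ^ (p - 1) - v s ^ (qq - 1))) (Set.Icc (0:ℝ) r) := by
    apply ContinuousOn.mul ((continuous_pow (N - 1)).continuousOn)
    apply ContinuousOn.sub
    · exact ((hvcont.mono hsub).rpow_const fun x hx => Or.inl (ne_of_gt (hpos x (hsub hx))))
    · exact ((hvcont.mono hsub).rpow_const fun x hx => Or.inl (ne_of_gt (hpos x (hsub hx))))
  have hint : IntervalIntegrable
      (fun s => s ^ (N - 1) * (v s ^ (p - 1) - v s ^ (qq - 1))) MeasureTheory.volume 0 r := by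
    apply ContinuousOn.intervalIntegrable
    rwa [Set.uIcc_of_le hrpos.le]
  -- continuity of W
  have hWcont : ContinuousOn (fun s => s ^ (N - 1) * v' s ^ (p - 1)) (Set.Icc (0:ℝ) r) := by
    apply ContinuousOn.mul ((continuous_pow (N - 1)).continuousOn)
    exact (hc'.mono hsub).rpow_const fun x hx => Or.inr hp0.le
  have hWderiv : ∀ x ∈ Set.Ioo (0:ℝ) r,
      HasDerivWithinAt (fun s => s ^ (N - 1) * v' s ^ (p - 1))
        (x ^ (N - 1) * (v x ^ (p - 1) - v x ^ (qq - 1))) (Set.Ioi x) x := by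
    intro x hx
    exact (hode x ⟨hx.1, hx.2.trans hr.2⟩).hasDerivWithinAt
  have hFTC := intervalIntegral.integral_eq_sub_of_hasDeriv_right_of_le hrpos.le hWcont
    hWderiv hint
  have hW0 : (0:ℝ) ^ (N - 1) * v' 0 ^ (p - 1) = 0 := by
    rw [h0, Real.zero_rpow hpne, mul_zero]
  rw [hW0, sub_zero] at hFTC
  have hrN : (0:ℝ) < r ^ (N - 1) := pow_pos hrpos _
  rw [hFTC]; field_simp

/-- If the solutions `v_n` converge uniformly to a limit `v_∞` which stays below `1`
on `[0,R]`, then the derivatives converge: `v_∞` is differentiable on `(0,R]` and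
`v_n' → v_∞'` uniformly on `[δ,R]` for every `δ ∈ (0,R)`. -/
theorem derivative_convergence
    (N : ℕ) (hN : 1 ≤ N) (p : ℝ) (hp1 : 1 < p) (hp2 : p < 2)
    (q : ℕ → ℝ) (hq : ∀ n, p < q n) (hqtop : Tendsto q atTop atTop)
    (v v' : ℕ → ℝ → ℝ)
    (hsol : ∀ n, IsRadialNeumannSol N p (q n) (v n) (v' n))
    (vinf : ℝ → ℝ) (hvinfcont : ContinuousOn vinf (Set.Icc (0:ℝ) 1))
    (hconv : TendstoUniformlyOn (fun n r => v n r) vinf atTop (Set.Icc (0:ℝ) 1))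
    (R : ℝ) (hR : R ∈ Set.Ioo (0:ℝ) 1)
    (hbelow : ∀ r ∈ Set.Icc (0:ℝ) R, vinf r < 1) :
    (∀ r ∈ Set.Ioc (0:ℝ) R, DifferentiableAt ℝ vinf r) ∧
    ∀ δ ∈ Set.Ioo (0:ℝ) R,
      TendstoUniformlyOn (fun n r => v' n r) (deriv vinf) atTop (Set.Icc δ R) := by
  obtain ⟨hR0, hR1⟩ := hR
  have hp0 : (0:ℝ) < p - 1 := by linarith
  have hpne : p - 1 ≠ 0 := ne_of_gt hp0
  have hp1le : p - 1 ≤ 1 := by linarith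
  -- components of solutions
  have hvd := fun n => (hsol n).1
  have hv'c := fun n => (hsol n).2.1
  have hvpos := fun n => (hsol n).2.2.1
  have hv'nn := fun n => (hsol n).2.2.2.2.1
  have hv'0 := fun n => (hsol n).2.2.2.2.2.1
  have hode := fun n => (hsol n).2.2.2.2.2.2.2
  have hvcont : ∀ n, ContinuousOn (v n) (Set.Icc (0:ℝ) 1) :=
    fun n x hx => (hvd n x hx).continuousWithinAt
  -- vinf is nonnegative
  have hvinf0 : ∀ x ∈ Set.Icc (0:ℝ) 1, 0 ≤ vinf x := by
    intro x hx
    exact ge_of_tendsto (hconv.tendsto_at hx)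
      (Eventually.of_forall fun n => (hvpos n x hx).le)
  -- the max of vinf on [0,R]
  obtain ⟨x0, hx0, hx0max'⟩ := (isCompact_Icc : IsCompact (Set.Icc (0:ℝ) R)).exists_isMaxOn
    (Set.nonempty_Icc.2 hR0.le) (hvinfcont.mono (Set.Icc_subset_Icc le_rfl hR1.le))
  have hx0max : ∀ y ∈ Set.Icc (0:ℝ) R, vinf y ≤ vinf x0 := fun y hy => hx0max' hy
  set c0 : ℝ := max (vinf x0) 0 with hc0def
  have hc0lt : c0 < 1 := by
    apply max_lt (hbelow x0 hx0) one_pos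
  have hc00 : 0 ≤ c0 := le_max_right _ _
  have hc0max : ∀ y ∈ Set.Icc (0:ℝ) R, vinf y ≤ c0 := fun y hy =>
    (hx0max y hy).trans (le_max_left _ _)
  set c₁ : ℝ := (1 + c0) / 2 with hc₁def
  have hc₁lt : c₁ < 1 := by rw [hc₁def]; linarith
  have hc₁0 : 0 ≤ c₁ := by rw [hc₁def]; linarith
  have hc0c₁ : c0 < c₁ := by rw [hc₁def]; linarith
  -- choose R₁ ∈ (R,1) on which vinf ≤ c₁
  obtain ⟨δ₀, hδ₀, hδ₀prop⟩ := Metric.continuousWithinAt_iff.1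
    (hvinfcont R ⟨hR0.le, hR1.le⟩) (c₁ - c0) (by linarith)
  set R₁ : ℝ := min (R + δ₀ / 2) ((R + 1) / 2) with hR₁def
  have hRR₁ : R < R₁ := lt_min (by linarith) (by linarith)
  have hR₁1 : R₁ < 1 := lt_of_le_of_lt (min_le_right _ _) (by linarith)
  have hR₁0 : 0 < R₁ := hR0.trans hRR₁
  have hvinfR₁ : ∀ y ∈ Set.Icc (0:ℝ) R₁, vinf y ≤ c₁ := by
    intro y hy
    rcases le_or_gt y R with h | h
    · exact (hc0max y ⟨hy.1, h⟩).trans hc0c₁.le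
    · have hy1 : y ∈ Set.Icc (0:ℝ) 1 := ⟨hy.1, hy.2.trans hR₁1.le⟩
      have hdist : dist y R < δ₀ := by
        rw [Real.dist_eq, abs_of_nonneg (by linarith)]
        have : y ≤ R + δ₀ / 2 := hy.2.trans (min_le_left _ _)
        linarith
      have := hδ₀prop hy1 hdist
      rw [Real.dist_eq, abs_lt] at this
      have hvR : vinf R ≤ c0 := hc0max R ⟨hR0.le, le_rfl⟩
      linarith [this.2]
  set c₂ : ℝ := (1 + c₁) / 2 with hc₂def
  have hc₂lt : c₂ < 1 := by rw [hc₂def]; linarith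
  have hc₂0 : 0 ≤ c₂ := by rw [hc₂def]; linarith
  have hc₁c₂ : c₁ < c₂ := by rw [hc₂def]; linarith
  -- eventually v n ≤ c₂ on [0, R₁]
  have hvbound : ∀ᶠ n in atTop, ∀ s ∈ Set.Icc (0:ℝ) R₁, v n s ≤ c₂ := by
    filter_upwards [Metric.tendstoUniformlyOn_iff.1 hconv (c₂ - c₁) (by linarith)] with n hn
    intro s hs
    have hs1 : s ∈ Set.Icc (0:ℝ) 1 := ⟨hs.1, hs.2.trans hR₁1.le⟩
    have := hn s hs1
    rw [Real.dist_eq, abs_lt] at this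
    have := hvinfR₁ s hs
    linarith
  -- the limiting integral and candidate derivative
  set J : ℝ → ℝ := fun r => ∫ s in (0:ℝ)..r, s ^ (N - 1) * vinf s ^ (p - 1) with hJdef
  set g : ℝ → ℝ := fun r => (J r / r ^ (N - 1)) ^ (p - 1)⁻¹ with hgdef
  -- integrability facts
  have hintJ : ∀ r ∈ Set.Icc (0:ℝ) 1,
      IntervalIntegrable (fun s => s ^ (N - 1) * vinf s ^ (p - 1)) MeasureTheory.volume 0 r := by
    intro r hr
    apply ContinuousOn.intervalIntegrable
    rw [Set.uIcc_of_le hr.1]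
    apply ContinuousOn.mul ((continuous_pow (N - 1)).continuousOn)
    exact (hvinfcont.mono (Set.Icc_subset_Icc le_rfl hr.2)).rpow_const
      fun x hx => Or.inr hp0.le
  have hintI : ∀ n, ∀ r ∈ Set.Icc (0:ℝ) 1,
      IntervalIntegrable (fun s => s ^ (N - 1) * (v n s ^ (p - 1) - v n s ^ (q n - 1)))
        MeasureTheory.volume 0 r := by
    intro n r hr
    apply ContinuousOn.intervalIntegrable
    rw [Set.uIcc_of_le hr.1]
    have hsub : Set.Icc (0:ℝ) r ⊆ Set.Icc (0:ℝ) 1 := Set.Icc_subset_Icc le_rfl hr.2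
    apply ContinuousOn.mul ((continuous_pow (N - 1)).continuousOn)
    apply ContinuousOn.sub
    · exact ((hvcont n).mono hsub).rpow_const fun x hx => Or.inl (ne_of_gt (hvpos n x (hsub hx)))
    · exact ((hvcont n).mono hsub).rpow_const fun x hx => Or.inl (ne_of_gt (hvpos n x (hsub hx)))
  -- F1 : uniform convergence of the integrals on [0, R₁]
  have hF1 : TendstoUniformlyOn
      (fun n r => ∫ s in (0:ℝ)..r, s ^ (N - 1) * (v n s ^ (p - 1) - v n s ^ (q n - 1)))
      J atTop (Set.Icc 0 R₁) := by
    rw [Metric.tendstoUniformlyOn_iff]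
    intro ε hε
    set η : ℝ := (ε / 4) ^ (p - 1)⁻¹ with hηdef
    have hη : 0 < η := Real.rpow_pos_of_pos (by linarith) _
    have hqn1 : Tendsto (fun n => c₂ ^ (q n - 1)) atTop (𝓝 0) := by
      apply (tendsto_rpow_atTop_of_base_lt_one c₂ (by linarith) hc₂lt).comp
      exact tendsto_atTop_add_const_right atTop (-1) hqtop
    filter_upwards [Metric.tendstoUniformlyOn_iff.1 hconv η hη, hvbound,
      hqn1.eventually (gt_mem_nhds (show (0:ℝ) < ε / 4 by linarith))] with n hA hB hC
    intro r hr
    have hr1 : r ∈ Set.Icc (0:ℝ) 1 := ⟨hr.1, hr.2.trans hR₁1.le⟩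
    rw [Real.dist_eq, hJdef]
    have heq : (∫ s in (0:ℝ)..r, s ^ (N - 1) * vinf s ^ (p - 1)) -
        (∫ s in (0:ℝ)..r, s ^ (N - 1) * (v n s ^ (p - 1) - v n s ^ (q n - 1))) =
        ∫ s in (0:ℝ)..r, (s ^ (N - 1) * vinf s ^ (p - 1)
          - s ^ (N - 1) * (v n s ^ (p - 1) - v n s ^ (q n - 1))) :=
      (intervalIntegral.integral_sub (hintJ r hr1) (hintI n r hr1)).symm
    rw [heq]
    have hbound : ∀ s ∈ Set.uIoc (0:ℝ) r,
        ‖s ^ (N - 1) * vinf s ^ (p - 1)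
          - s ^ (N - 1) * (v n s ^ (p - 1) - v n s ^ (q n - 1))‖ ≤ ε / 2 := by
      intro s hs
      rw [Set.uIoc_of_le hr.1] at hs
      have hs1 : s ∈ Set.Icc (0:ℝ) 1 := ⟨hs.1.le, hs.2.trans hr1.2⟩
      have hsR₁ : s ∈ Set.Icc (0:ℝ) R₁ := ⟨hs.1.le, hs.2.trans hr.2⟩
      have hsN : s ^ (N - 1) ≤ 1 := pow_le_one₀ hs.1.le hs1.2
      have hsN0 : 0 ≤ s ^ (N - 1) := pow_nonneg hs.1.le _
      have h1 : |vinf s ^ (p - 1) - v n s ^ (p - 1)| ≤ ε / 4 := by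
        have := my_rpow_holder (hvinf0 s hs1) (hvpos n s hs1).le hp0 hp1le
        apply this.trans
        have habs : |vinf s - v n s| ≤ η := by
          have := hA s hs1; rw [Real.dist_eq] at this; exact this.le
        calc |vinf s - v n s| ^ (p - 1) ≤ η ^ (p - 1) :=
              Real.rpow_le_rpow (abs_nonneg _) habs hp0.le
          _ = ε / 4 := by rw [hηdef, Real.rpow_inv_rpow (by linarith) hpne]
      have h2 : v n s ^ (q n - 1) ≤ ε / 4 := by
        calc v n s ^ (q n - 1) ≤ c₂ ^ (q n - 1) :=
              Real.rpow_le_rpow (hvpos n s hs1).le (hB s hsR₁) (by linarith [hq n])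
          _ ≤ ε / 4 := hC.le
      have h2' : 0 ≤ v n s ^ (q n - 1) := Real.rpow_nonneg (hvpos n s hs1).le _
      have key : s ^ (N - 1) * vinf s ^ (p - 1)
          - s ^ (N - 1) * (v n s ^ (p - 1) - v n s ^ (q n - 1))
          = s ^ (N - 1) * ((vinf s ^ (p - 1) - v n s ^ (p - 1)) + v n s ^ (q n - 1)) := by ring
      rw [key, Real.norm_eq_abs, abs_mul, abs_of_nonneg hsN0]
      calc s ^ (N - 1) * |vinf s ^ (p - 1) - v n s ^ (p - 1) + v n s ^ (q n - 1)|
          ≤ 1 * (|vinf s ^ (p - 1) - v n s ^ (p - 1)| + |v n s ^ (q n - 1)|) := by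
            apply mul_le_mul hsN (abs_add_le _ _) (abs_nonneg _) zero_le_one
        _ ≤ ε / 4 + ε / 4 := by
            rw [one_mul, abs_of_nonneg h2']; exact add_le_add h1 h2
        _ = ε / 2 := by ring
    calc |∫ s in (0:ℝ)..r, (s ^ (N - 1) * vinf s ^ (p - 1)
          - s ^ (N - 1) * (v n s ^ (p - 1) - v n s ^ (q n - 1)))|
        ≤ ε / 2 * |r - 0| := intervalIntegral.norm_integral_le_of_norm_le_const hbound
      _ ≤ ε / 2 * 1 := by
          rw [sub_zero, abs_of_nonneg hr.1]
          exact mul_le_mul_of_nonneg_left hr1.2 (by linarith)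
      _ < ε := by linarith
  -- J is nonnegative and bounded on [0, R₁]
  have hJnn : ∀ r ∈ Set.Icc (0:ℝ) R₁, 0 ≤ J r := by
    intro r hr
    apply intervalIntegral.integral_nonneg hr.1
    intro s hs
    exact mul_nonneg (pow_nonneg hs.1 _)
      (Real.rpow_nonneg (hvinf0 s ⟨hs.1, hs.2.trans (hr.2.trans hR₁1.le)⟩) _)
  have hJle : ∀ r ∈ Set.Icc (0:ℝ) R₁, |J r| ≤ 1 := by
    intro r hr
    have hr1 : r ∈ Set.Icc (0:ℝ) 1 := ⟨hr.1, hr.2.trans hR₁1.le⟩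
    have hb : ∀ s ∈ Set.uIoc (0:ℝ) r, ‖s ^ (N - 1) * vinf s ^ (p - 1)‖ ≤ 1 := by
      intro s hs
      rw [Set.uIoc_of_le hr.1] at hs
      have hs1 : s ∈ Set.Icc (0:ℝ) 1 := ⟨hs.1.le, hs.2.trans hr1.2⟩
      have hsR₁ : s ∈ Set.Icc (0:ℝ) R₁ := ⟨hs.1.le, hs.2.trans hr.2⟩
      rw [Real.norm_eq_abs, abs_mul, abs_of_nonneg (pow_nonneg hs.1.le _),
        abs_of_nonneg (Real.rpow_nonneg (hvinf0 s hs1) _)]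
      have h1 : s ^ (N - 1) ≤ 1 := pow_le_one₀ hs.1.le hs1.2
      have h2 : vinf s ^ (p - 1) ≤ 1 :=
        Real.rpow_le_one (hvinf0 s hs1) ((hvinfR₁ s hsR₁).trans hc₁lt.le) hp0.le
      nlinarith [pow_nonneg hs.1.le (N - 1)]
    have := intervalIntegral.norm_integral_le_of_norm_le_const hb
    rw [sub_zero, abs_of_nonneg hr.1, one_mul] at this
    calc |J r| ≤ r := this
      _ ≤ 1 := hr1.2
  -- main uniform convergence statement
  have main : ∀ δ : ℝ, 0 < δ → δ < R₁ →
      TendstoUniformlyOn (fun n r => v' n r) g atTop (Set.Icc δ R₁) := by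
    intro δ hδ0 hδR₁
    have hδN : (0:ℝ) < δ ^ (N - 1) := pow_pos hδ0 _
    have hF2 : TendstoUniformlyOn
        (fun n r => (∫ s in (0:ℝ)..r, s ^ (N - 1) * (v n s ^ (p - 1) - v n s ^ (q n - 1)))
          / r ^ (N - 1))
        (fun r => J r / r ^ (N - 1)) atTop (Set.Icc δ R₁) := by
      rw [Metric.tendstoUniformlyOn_iff]
      intro ε hε
      filter_upwards [Metric.tendstoUniformlyOn_iff.1 hF1 (ε * δ ^ (N - 1))
        (by positivity)] with n hn
      intro r hr
      have hrs : r ∈ Set.Icc (0:ℝ) R₁ := ⟨hδ0.le.trans hr.1, hr.2⟩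
      have hrN : (0:ℝ) < r ^ (N - 1) := pow_pos (hδ0.trans_le hr.1) _
      have hδr : δ ^ (N - 1) ≤ r ^ (N - 1) := pow_le_pow_left₀ hδ0.le hr.1 _
      have h2 := hn r hrs
      rw [Real.dist_eq] at h2
      rw [Real.dist_eq, div_sub_div_same, abs_div, abs_of_pos hrN, div_lt_iff₀ hrN]
      exact h2.trans_le (mul_le_mul_of_nonneg_left hδr hε.le)
    set M : ℝ := 1 / δ ^ (N - 1) + 1 with hMdef
    have hfm' : ∀ r ∈ Set.Icc δ R₁, |J r / r ^ (N - 1)| ≤ 1 / δ ^ (N - 1) := by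
      intro r hr
      have hrN : (0:ℝ) < r ^ (N - 1) := pow_pos (hδ0.trans_le hr.1) _
      have hδr : δ ^ (N - 1) ≤ r ^ (N - 1) := pow_le_pow_left₀ hδ0.le hr.1 _
      rw [abs_div, abs_of_pos hrN]
      exact div_le_div₀ zero_le_one (hJle r ⟨hδ0.le.trans hr.1, hr.2⟩) hδN hδr
    have hfm : ∀ r ∈ Set.Icc δ R₁, J r / r ^ (N - 1) ∈ Set.Icc (-M) M := by
      intro r hr
      rw [Set.mem_Icc, ← abs_le]
      calc |J r / r ^ (N - 1)| ≤ 1 / δ ^ (N - 1) := hfm' r hr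
        _ ≤ M := by rw [hMdef]; linarith
    have hFmem : ∀ᶠ n in atTop, ∀ r ∈ Set.Icc δ R₁,
        (∫ s in (0:ℝ)..r, s ^ (N - 1) * (v n s ^ (p - 1) - v n s ^ (q n - 1)))
          / r ^ (N - 1) ∈ Set.Icc (-M) M := by
      filter_upwards [Metric.tendstoUniformlyOn_iff.1 hF2 1 one_pos] with n hn
      intro r hr
      have h1 := hn r hr
      rw [Real.dist_eq, abs_lt] at h1
      have h2 := abs_le.1 (hfm' r hr)
      rw [Set.mem_Icc, hMdef]
      constructor <;> [linarith [h1.1, h2.1]; linarith [h1.2, h2.2]]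
    set φ : ℝ → ℝ := fun x => |x| ^ (p - 1)⁻¹ with hφdef
    have hφcont : Continuous φ :=
      continuous_abs.rpow_const fun x => Or.inr (by positivity)
    have hcomp := my_comp_unif (isCompact_Icc : IsCompact (Set.Icc (-M) M))
      hφcont.continuousOn hFmem hfm hF2
    have heq1 : ∀ n, Set.EqOn
        (fun r => φ ((∫ s in (0:ℝ)..r, s ^ (N - 1) * (v n s ^ (p - 1) - v n s ^ (q n - 1)))
          / r ^ (N - 1)))
        (fun r => v' n r) (Set.Icc δ R₁) := by
      intro n r hr
      have hr01 : r ∈ Set.Ioo (0:ℝ) 1 := ⟨hδ0.trans_le hr.1, hr.2.trans_lt hR₁1⟩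
      have hr011 : r ∈ Set.Icc (0:ℝ) 1 := ⟨hr01.1.le, hr01.2.le⟩
      have hform := my_formula N p (q n) hp1 (v n) (v' n) (hvd n) (hv'c n) (hvpos n)
        (hv'nn n) (hv'0 n) (hode n) hr01
      simp only [hφdef]
      rw [hform, abs_of_nonneg (Real.rpow_nonneg (hv'nn n r hr011) _),
        Real.rpow_rpow_inv (hv'nn n r hr011) hpne]
    have heq2 : Set.EqOn (fun r => φ (J r / r ^ (N - 1))) g (Set.Icc δ R₁) := by
      intro r hr
      have hrN : (0:ℝ) < r ^ (N - 1) := pow_pos (hδ0.trans_le hr.1) _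
      have hJr := hJnn r ⟨hδ0.le.trans hr.1, hr.2⟩
      simp only [hφdef, hgdef]
      rw [abs_of_nonneg (div_nonneg hJr hrN.le)]
    exact (hcomp.congr (Eventually.of_forall heq1)).congr_right heq2
  -- differentiability of the limit
  have hderivAt : ∀ r ∈ Set.Ioo (0:ℝ) R₁, HasDerivAt vinf (g r) r := by
    intro r hr
    have hr2 : 0 < r / 2 := by linarith [hr.1]
    refine hasDerivAt_of_tendstoUniformlyOn (f := fun n x => v n x) (isOpen_Ioo : IsOpen (Set.Ioo (r/2) R₁))
      ((main (r/2) hr2 (by linarith [hr.2])).mono Set.Ioo_subset_Icc_self) ?_ ?_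
      ⟨by linarith [hr.1], hr.2⟩
    · apply Eventually.of_forall
      intro n x hx
      have hx01 : x ∈ Set.Icc (0:ℝ) 1 := ⟨by linarith [hx.1], (hx.2.trans hR₁1).le⟩
      exact (hvd n x hx01).hasDerivAt (Icc_mem_nhds (by linarith [hx.1]) (hx.2.trans hR₁1))
    · intro x hx
      exact hconv.tendsto_at ⟨by linarith [hx.1], (hx.2.trans hR₁1).le⟩
  constructor
  · intro r hr
    exact (hderivAt r ⟨hr.1, hr.2.trans_lt hRR₁⟩).differentiableAt
  · intro δ hδ
    have h := (main δ hδ.1 (hδ.2.trans hRR₁)).mono (Set.Icc_subset_Icc le_rfl hRR₁.le)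
    apply h.congr_right
    intro r hr
    exact ((hderivAt r ⟨hδ.1.trans_le hr.1, hr.2.trans_lt hRR₁⟩).deriv).symm
end
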